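/- Let (H,α) be a monoidal Hom-Hopf algebra, (A,β) a right (H,α)-Hom-comodule algebra with a total integral φ:H→A, and (M,μ), (N,ν) relative Hom-Hopf modules. For a k-linear map f:N→M with f∘ν=μ∘f, define f_φ:N→M by f_φ(n) = μ⁻¹(f(n_(0))_(0)) · φ(S(f(n_(0))_(1)) α(n_(1))). Then f_φ is a morphism of right (H,α)-Hom-comodules: ρ_M∘f_φ = (f_φ⊗id_H)∘ρ_N. -/

import Mathlib

/- Preliminaries: monoidal Hom-structures (Caenepeel–Goyvaerts style), following the paper. -/

open TensorProduct

noncomputable section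

universe u v

/-- A monoidal Hom-algebra `(A, β)`. -/
structure HomAlgebra (k : Type v) (A : Type u) [CommRing k] [AddCommGroup A] [Module k A] where
  aut : A ≃ₗ[k] A
  mul : A →ₗ[k] A →ₗ[k] A
  one : A
  aut_mul : ∀ a b : A, aut (mul a b) = mul (aut a) (aut b)
  aut_one : aut one = one
  hom_assoc : ∀ a b c : A, mul (aut a) (mul b c) = mul (mul a b) (aut c)
  one_mul : ∀ a : A, mul one a = aut a
  mul_one : ∀ a : A, mul a one = aut a

/-- The bilinear map on tensor products induced by two bilinear maps:
`(m ⊗ n, p ⊗ q) ↦ f m p ⊗ g n q`. -/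
def biTensor {k : Type v} [CommRing k] {M N P Q R S : Type*}
    [AddCommGroup M] [Module k M] [AddCommGroup N] [Module k N]
    [AddCommGroup P] [Module k P] [AddCommGroup Q] [Module k Q]
    [AddCommGroup R] [Module k R] [AddCommGroup S] [Module k S]
    (f : M →ₗ[k] P →ₗ[k] R) (g : N →ₗ[k] Q →ₗ[k] S) :
    M ⊗[k] N →ₗ[k] P ⊗[k] Q →ₗ[k] R ⊗[k] S :=
  (TensorProduct.homTensorHomMap (RingHom.id k) P Q R S).comp (TensorProduct.map f g)

/-- A monoidal Hom-Hopf algebra `(H, α, S)`. -/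
structure HomHopfAlgebra (k : Type v) (H : Type u) [CommRing k] [AddCommGroup H] [Module k H]
    extends HomAlgebra k H where
  comul : H →ₗ[k] H ⊗[k] H
  counit : H →ₗ[k] k
  comul_aut : ∀ h, comul (aut h) = TensorProduct.map aut.toLinearMap aut.toLinearMap (comul h)
  counit_aut : ∀ h, counit (aut h) = counit h
  hom_coassoc : ∀ h, TensorProduct.map aut.symm.toLinearMap comul (comul h)
      = TensorProduct.assoc k H H H (TensorProduct.map comul aut.toLinearMap (comul h))
  counit_comul_left : ∀ h,
      TensorProduct.lid k H (TensorProduct.map counit LinearMap.id (comul h)) = aut.symm h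
  counit_comul_right : ∀ h,
      TensorProduct.rid k H (TensorProduct.map LinearMap.id counit (comul h)) = aut.symm h
  comul_mul : ∀ a b, comul (mul a b) = biTensor mul mul (comul a) (comul b)
  comul_one : comul one = one ⊗ₜ[k] one
  counit_mul : ∀ a b, counit (mul a b) = counit a * counit b
  counit_one : counit one = 1
  antipode : H →ₗ[k] H
  antipode_convolution : ∀ h,
      TensorProduct.lift mul (TensorProduct.map antipode LinearMap.id (comul h)) = counit h • one
  convolution_antipode : ∀ h,
      TensorProduct.lift mul (TensorProduct.map LinearMap.id antipode (comul h)) = counit h • one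
  antipode_aut : ∀ h, antipode (aut h) = aut (antipode h)

variable {k : Type v} [CommRing k]
variable {H : Type u} [AddCommGroup H] [Module k H]
variable {A : Type u} [AddCommGroup A] [Module k A]

/-- A right `(A, β)`-Hom-module `(M, μ)`. -/
structure HomModule (k : Type v) {A : Type u} [CommRing k] [AddCommGroup A] [Module k A]
    (Aa : HomAlgebra k A) (M : Type u) [AddCommGroup M] [Module k M] where
  aut : M ≃ₗ[k] M
  act : M →ₗ[k] A →ₗ[k] M
  act_act : ∀ (m : M) (a b : A), act (act m a) (Aa.aut b) = act (aut m) (Aa.mul a b)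
  act_one : ∀ m : M, act m Aa.one = aut m
  aut_act : ∀ (m : M) (a : A), aut (act m a) = act (aut m) (Aa.aut a)

/-- A right `(H, α)`-Hom-comodule `(M, μ)`. -/
structure HomComodule (k : Type v) {H : Type u} [CommRing k] [AddCommGroup H] [Module k H]
    (Hh : HomHopfAlgebra k H) (M : Type u) [AddCommGroup M] [Module k M] where
  aut : M ≃ₗ[k] M
  coact : M →ₗ[k] M ⊗[k] H
  coact_aut : ∀ m, coact (aut m) = TensorProduct.map aut.toLinearMap Hh.aut.toLinearMap (coact m)
  counit_coact : ∀ m,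
      TensorProduct.rid k M (TensorProduct.map LinearMap.id Hh.counit (coact m)) = aut.symm m
  hom_coassoc : ∀ m,
      TensorProduct.assoc k M H H (TensorProduct.map coact Hh.aut.symm.toLinearMap (coact m))
        = TensorProduct.map aut.symm.toLinearMap Hh.comul (coact m)

/-- A right `(H, α)`-Hom-comodule algebra `(A, β)`. -/
structure HomComoduleAlgebra (k : Type v) {H : Type u} [CommRing k] [AddCommGroup H] [Module k H]
    (Hh : HomHopfAlgebra k H) (A : Type u) [AddCommGroup A] [Module k A]
    extends HomAlgebra k A where
  coact : A →ₗ[k] A ⊗[k] H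
  coact_aut : ∀ a, coact (aut a) = TensorProduct.map aut.toLinearMap Hh.aut.toLinearMap (coact a)
  counit_coact : ∀ a,
      TensorProduct.rid k A (TensorProduct.map LinearMap.id Hh.counit (coact a)) = aut.symm a
  hom_coassoc : ∀ a,
      TensorProduct.assoc k A H H (TensorProduct.map coact Hh.aut.symm.toLinearMap (coact a))
        = TensorProduct.map aut.symm.toLinearMap Hh.comul (coact a)
  coact_mul : ∀ a b, coact (mul a b) = biTensor mul Hh.mul (coact a) (coact b)
  coact_one : coact one = one ⊗ₜ[k] Hh.one

/-- A relative Hom-Hopf module `(M, μ)`. -/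
structure RelHopfModule (k : Type v) {H A : Type u} [CommRing k]
    [AddCommGroup H] [Module k H] [AddCommGroup A] [Module k A]
    (Hh : HomHopfAlgebra k H) (AA : HomComoduleAlgebra k Hh A)
    (M : Type u) [AddCommGroup M] [Module k M] where
  aut : M ≃ₗ[k] M
  act : M →ₗ[k] A →ₗ[k] M
  act_act : ∀ (m : M) (a b : A), act (act m a) (AA.aut b) = act (aut m) (AA.mul a b)
  act_one : ∀ m : M, act m AA.one = aut m
  aut_act : ∀ (m : M) (a : A), aut (act m a) = act (aut m) (AA.aut a)
  coact : M →ₗ[k] M ⊗[k] H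
  coact_aut : ∀ m, coact (aut m) = TensorProduct.map aut.toLinearMap Hh.aut.toLinearMap (coact m)
  counit_coact : ∀ m,
      TensorProduct.rid k M (TensorProduct.map LinearMap.id Hh.counit (coact m)) = aut.symm m
  hom_coassoc : ∀ m,
      TensorProduct.assoc k M H H (TensorProduct.map coact Hh.aut.symm.toLinearMap (coact m))
        = TensorProduct.map aut.symm.toLinearMap Hh.comul (coact m)
  compat : ∀ (m : M) (a : A), coact (act m a) = biTensor act Hh.mul (coact m) (AA.coact a)

/-- The underlying Hom-module of a relative Hom-Hopf module. -/
def RelHopfModule.toHomModule {Hh : HomHopfAlgebra k H} {AA : HomComoduleAlgebra k Hh A}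
    {M : Type u} [AddCommGroup M] [Module k M] (T : RelHopfModule k Hh AA M) :
    HomModule k AA.toHomAlgebra M :=
  ⟨T.aut, T.act, T.act_act, T.act_one, T.aut_act⟩

/-- The underlying Hom-comodule of a relative Hom-Hopf module. -/
def RelHopfModule.toHomComodule {Hh : HomHopfAlgebra k H} {AA : HomComoduleAlgebra k Hh A}
    {M : Type u} [AddCommGroup M] [Module k M] (T : RelHopfModule k Hh AA M) :
    HomComodule k Hh M :=
  ⟨T.aut, T.coact, T.coact_aut, T.counit_coact, T.hom_coassoc⟩

/-- A total integral `φ : (H, α) → (A, β)`. -/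
structure TotalIntegral (k : Type v) {H A : Type u} [CommRing k]
    [AddCommGroup H] [Module k H] [AddCommGroup A] [Module k A]
    (Hh : HomHopfAlgebra k H) (AA : HomComoduleAlgebra k Hh A) where
  toFun : H →ₗ[k] A
  colinear : ∀ h, AA.coact (toFun h) = TensorProduct.map toFun LinearMap.id (Hh.comul h)
  commutes : ∀ h, toFun (Hh.aut h) = AA.aut (toFun h)
  normal : toFun Hh.one = AA.one

/-- The `(A, β)`-action on `M ⊗ H` of the right adjoint `G`:
`(m ⊗ h) · a = m · a₍₀₎ ⊗ h a₍₁₎`. -/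
def Gact {M : Type u} [AddCommGroup M] [Module k M]
    (Hh : HomHopfAlgebra k H) (AA : HomComoduleAlgebra k Hh A)
    (act : M →ₗ[k] A →ₗ[k] M) : (M ⊗[k] H) →ₗ[k] A →ₗ[k] (M ⊗[k] H) :=
  (biTensor act Hh.mul).compl₂ AA.coact

/-- The `(H, α)`-coaction on `M ⊗ H` of the right adjoint `G`:
`ρ(m ⊗ h) = (μ⁻¹(m) ⊗ h₍₁₎) ⊗ α(h₍₂₎)`. -/
def Gcoact {M : Type u} [AddCommGroup M] [Module k M]
    (Hh : HomHopfAlgebra k H) (autM : M ≃ₗ[k] M) :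
    M ⊗[k] H →ₗ[k] (M ⊗[k] H) ⊗[k] H :=
  ((TensorProduct.assoc k M H H).symm.toLinearMap).comp
    (TensorProduct.map autM.symm.toLinearMap
      ((TensorProduct.map LinearMap.id Hh.aut.toLinearMap).comp Hh.comul))

/-- The counit of the adjunction: `δ(n ⊗ h) = ε(h) n`. -/
def Gcounit (Hh : HomHopfAlgebra k H) (N : Type u) [AddCommGroup N] [Module k N] :
    N ⊗[k] H →ₗ[k] N :=
  (TensorProduct.rid k N).toLinearMap.comp (TensorProduct.map LinearMap.id Hh.counit)

/-- The map `λ_M : M ⊗ H → M`, `λ_M(m ⊗ h) = μ⁻¹(m₍₀₎) · φ(S(m₍₁₎) α(h))`. -/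
def lamMap {M : Type u} [AddCommGroup M] [Module k M]
    {Hh : HomHopfAlgebra k H} {AA : HomComoduleAlgebra k Hh A}
    (φ : H →ₗ[k] A) (T : RelHopfModule k Hh AA M) : M ⊗[k] H →ₗ[k] M :=
  (TensorProduct.lift T.act).comp
    ((TensorProduct.map T.aut.symm.toLinearMap
        (φ.comp ((TensorProduct.lift Hh.mul).comp
          (TensorProduct.map Hh.antipode Hh.aut.toLinearMap)))).comp
      (((TensorProduct.assoc k M H H).toLinearMap).comp
        (TensorProduct.map T.coact LinearMap.id)))

/-- The trace map `m ↦ m₍₀₎ · φ(S(m₍₁₎))` (for any Hom-action `act` and Hom-coaction `coact`). -/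
def traceMap {M : Type u} [AddCommGroup M] [Module k M]
    (S : H →ₗ[k] H) (φ : H →ₗ[k] A)
    (act : M →ₗ[k] A →ₗ[k] M) (coact : M →ₗ[k] M ⊗[k] H) : M →ₗ[k] M :=
  (TensorProduct.lift act).comp
    ((TensorProduct.map LinearMap.id (φ.comp S)).comp coact)

/-- A normalized `(A, β)`-integral `θ : H ⊗ H → A`. -/
structure NormalizedIntegral (k : Type v) {H A : Type u} [CommRing k]
    [AddCommGroup H] [Module k H] [AddCommGroup A] [Module k A]
    (Hh : HomHopfAlgebra k H) (AA : HomComoduleAlgebra k Hh A) where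
  θ : H ⊗[k] H →ₗ[k] A
  commutes : ∀ x, θ (TensorProduct.map Hh.aut.toLinearMap Hh.aut.toLinearMap x) = AA.aut (θ x)
  /-- `θ(α⁻¹(g) ⊗ h₍₁₎) ⊗ α(h₍₂₎) = β(θ(g₍₂₎ ⊗ α⁻¹(h))₍₀₎) ⊗ g₍₁₎ θ(g₍₂₎ ⊗ α⁻¹(h))₍₁₎`. -/
  cond1 : ∀ g h : H,
    TensorProduct.map θ Hh.aut.toLinearMap
        ((TensorProduct.assoc k H H H).symm (Hh.aut.symm g ⊗ₜ[k] Hh.comul h))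
      = TensorProduct.lift
          ((TensorProduct.homTensorHomMap (RingHom.id k) A H A H).comp
            (((TensorProduct.mk k (A →ₗ[k] A) (H →ₗ[k] H)) AA.aut.toLinearMap).comp Hh.mul))
          (TensorProduct.map LinearMap.id
            (AA.coact.comp (θ.comp ((TensorProduct.mk k H H).flip (Hh.aut.symm h))))
            (Hh.comul g))
  /-- `θ(h₍₁₎ ⊗ h₍₂₎) = ε(h) 1_A`. -/
  cond2 : ∀ h : H, θ (Hh.comul h) = Hh.counit h • AA.one
  /-- `β²(a₍₀₎₍₀₎) θ(α⁻¹(g) a₍₀₎₍₁₎ ⊗ α⁻¹(h) α⁻¹(a₍₁₎)) = θ(g ⊗ h) a`. -/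
  cond3 : ∀ (g h : H) (a : A),
    TensorProduct.lift AA.mul
      (TensorProduct.map (AA.aut.toLinearMap.comp AA.aut.toLinearMap)
          (θ.comp (TensorProduct.map (Hh.mul (Hh.aut.symm g)) (Hh.mul (Hh.aut.symm h))))
        (TensorProduct.assoc k A H H
          (TensorProduct.map AA.coact Hh.aut.symm.toLinearMap (AA.coact a))))
      = AA.mul (θ (g ⊗ₜ[k] h)) a

/-- The map `ν_M : M ⊗ H → M`, `ν_M(m ⊗ h) = μ(m₍₀₎) · θ(m₍₁₎ ⊗ α⁻¹(h))`. -/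
def nuMap {M : Type u} [AddCommGroup M] [Module k M]
    {Hh : HomHopfAlgebra k H} {AA : HomComoduleAlgebra k Hh A}
    (θ : H ⊗[k] H →ₗ[k] A) (T : RelHopfModule k Hh AA M) : M ⊗[k] H →ₗ[k] M :=
  (TensorProduct.lift T.act).comp
    ((TensorProduct.map T.aut.toLinearMap
        (θ.comp (TensorProduct.map LinearMap.id Hh.aut.symm.toLinearMap))).comp
      (((TensorProduct.assoc k M H H).toLinearMap).comp
        (TensorProduct.map T.coact LinearMap.id)))

/-- The `(A, β)`-action on `M ⊗ A`: `(m ⊗ a) · b = μ⁻¹(m) ⊗ a β(b)`. -/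
def MAact {M : Type u} [AddCommGroup M] [Module k M]
    {Hh : HomHopfAlgebra k H} (AA : HomComoduleAlgebra k Hh A)
    (autM : M ≃ₗ[k] M) : (M ⊗[k] A) →ₗ[k] A →ₗ[k] (M ⊗[k] A) :=
  (((TensorProduct.homTensorHomMap (RingHom.id k) M A M A).comp
    (((((TensorProduct.mk k (M →ₗ[k] M) (A →ₗ[k] A)) autM.symm.toLinearMap).comp
      AA.mul.flip).comp AA.aut.toLinearMap)))).flip

/-- The `(H, α)`-coaction on `M ⊗ A`: `ρ(m ⊗ a) = (m₍₀₎ ⊗ a₍₀₎) ⊗ m₍₁₎ a₍₁₎`. -/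
def MAcoact {M : Type u} [AddCommGroup M] [Module k M]
    (Hh : HomHopfAlgebra k H) (AA : HomComoduleAlgebra k Hh A)
    (coactM : M →ₗ[k] M ⊗[k] H) : (M ⊗[k] A) →ₗ[k] (M ⊗[k] A) ⊗[k] H :=
  (TensorProduct.map LinearMap.id (TensorProduct.lift Hh.mul)).comp
    ((TensorProduct.tensorTensorTensorComm k M H A H).toLinearMap.comp
      (TensorProduct.map coactM AA.coact))

/-- The map `ξ : H ⊗ A → A ⊗ H`, `ξ(h ⊗ a) = β(a₍₀₎) ⊗ α⁻¹(h) a₍₁₎`. -/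
def xiMap (Hh : HomHopfAlgebra k H) (AA : HomComoduleAlgebra k Hh A) :
    H ⊗[k] A →ₗ[k] A ⊗[k] H :=
  (TensorProduct.lift ((TensorProduct.homTensorHomMap (RingHom.id k) A H A H).comp
      (((((TensorProduct.mk k (A →ₗ[k] A) (H →ₗ[k] H)) AA.aut.toLinearMap).comp
        Hh.mul).comp Hh.aut.symm.toLinearMap)))).comp
    (TensorProduct.map LinearMap.id AA.coact)

/-- Morphisms of right `(A, β)`-Hom-modules. -/
def IsHomModuleHom {M N : Type u} [AddCommGroup M] [Module k M] [AddCommGroup N] [Module k N]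
    {Aa : HomAlgebra k A} (Mm : HomModule k Aa M) (Nn : HomModule k Aa N)
    (f : M →ₗ[k] N) : Prop :=
  (∀ m, f (Mm.aut m) = Nn.aut (f m)) ∧ ∀ m a, f (Mm.act m a) = Nn.act (f m) a

/-- Morphisms of right `(H, α)`-Hom-comodules. -/
def IsHomComoduleHom {M N : Type u} [AddCommGroup M] [Module k M] [AddCommGroup N] [Module k N]
    {Hh : HomHopfAlgebra k H} (Mm : HomComodule k Hh M) (Nn : HomComodule k Hh N)
    (f : M →ₗ[k] N) : Prop :=
  (∀ m, f (Mm.aut m) = Nn.aut (f m)) ∧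
    Nn.coact.comp f = (TensorProduct.map f LinearMap.id).comp Mm.coact

/-- Morphisms of relative Hom-Hopf modules. -/
def IsRelHopfHom {M N : Type u} [AddCommGroup M] [Module k M] [AddCommGroup N] [Module k N]
    {Hh : HomHopfAlgebra k H} {AA : HomComoduleAlgebra k Hh A}
    (Mm : RelHopfModule k Hh AA M) (Nn : RelHopfModule k Hh AA N)
    (f : M →ₗ[k] N) : Prop :=
  (∀ m, f (Mm.aut m) = Nn.aut (f m)) ∧
    (∀ m a, f (Mm.act m a) = Nn.act (f m) a) ∧
    Nn.coact.comp f = (TensorProduct.map f LinearMap.id).comp Mm.coact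

end

/-! ### Auxiliary development for the main theorem -/

noncomputable section AuxDev

open TensorProduct LinearMap

variable {k : Type v} [CommRing k]

section TensorHelpers

variable {M N P Q R S : Type*}
  [AddCommGroup M] [Module k M] [AddCommGroup N] [Module k N]
  [AddCommGroup P] [Module k P] [AddCommGroup Q] [Module k Q]
  [AddCommGroup R] [Module k R] [AddCommGroup S] [Module k S]

theorem aux_map_map (f : P →ₗ[k] R) (g : Q →ₗ[k] S) (f' : M →ₗ[k] P) (g' : N →ₗ[k] Q)
    (t : M ⊗[k] N) :
    TensorProduct.map f g (TensorProduct.map f' g' t)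
      = TensorProduct.map (f.comp f') (g.comp g') t := by
  rw [← LinearMap.comp_apply, ← TensorProduct.map_comp]

theorem aux_biTensor_tmul (f : M →ₗ[k] P →ₗ[k] R) (g : N →ₗ[k] Q →ₗ[k] S)
    (m : M) (n : N) :
    biTensor f g (m ⊗ₜ[k] n) = TensorProduct.map (f m) (g n) := by
  simp [biTensor, TensorProduct.homTensorHomMap_apply]

theorem aux_assoc_nat (f : M →ₗ[k] Q) (g : N →ₗ[k] R) (h : P →ₗ[k] S)
    (t : (M ⊗[k] N) ⊗[k] P) :
    TensorProduct.assoc k Q R S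
        (TensorProduct.map (TensorProduct.map f g) h t)
      = TensorProduct.map f (TensorProduct.map g h) (TensorProduct.assoc k M N P t) := by
  have hmap : (TensorProduct.assoc k Q R S).toLinearMap.comp
        (TensorProduct.map (TensorProduct.map f g) h)
      = (TensorProduct.map f (TensorProduct.map g h)).comp
        (TensorProduct.assoc k M N P).toLinearMap := by
    apply TensorProduct.ext_threefold
    intro x y z
    simp
  simpa using LinearMap.congr_fun hmap t

theorem aux_assoc_symm_nat (f : M →ₗ[k] Q) (g : N →ₗ[k] R) (h : P →ₗ[k] S)
    (t : M ⊗[k] (N ⊗[k] P)) :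
    (TensorProduct.assoc k Q R S).symm
        (TensorProduct.map f (TensorProduct.map g h) t)
      = TensorProduct.map (TensorProduct.map f g) h
          ((TensorProduct.assoc k M N P).symm t) := by
  apply (TensorProduct.assoc k Q R S).injective
  rw [LinearEquiv.apply_symm_apply, aux_assoc_nat, LinearEquiv.apply_symm_apply]

theorem aux_assoc_tmul_left (t : M ⊗[k] N) (p : P) :
    TensorProduct.assoc k M N P (t ⊗ₜ[k] p)
      = TensorProduct.map LinearMap.id ((TensorProduct.mk k N P).flip p) t := by
  induction t using TensorProduct.induction_on with
  | zero => simp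
  | tmul x y => simp
  | add x y hx hy => rw [TensorProduct.add_tmul, map_add, map_add, hx, hy]

theorem aux_assoc_symm_tmul_right (x : M) (t : N ⊗[k] P) :
    (TensorProduct.assoc k M N P).symm (x ⊗ₜ[k] t)
      = TensorProduct.map (TensorProduct.mk k M N x) LinearMap.id t := by
  induction t using TensorProduct.induction_on with
  | zero => simp
  | tmul y z => simp
  | add y z hy hz => rw [TensorProduct.tmul_add, map_add, map_add, hy, hz]

theorem aux_lid_nat (g : M →ₗ[k] N) (t : k ⊗[k] M) :
    TensorProduct.lid k N (TensorProduct.map LinearMap.id g t)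
      = g (TensorProduct.lid k M t) := by
  induction t using TensorProduct.induction_on with
  | zero => simp
  | tmul r x => simp
  | add x y hx hy => simp only [map_add, hx, hy]

theorem aux_rid_nat (g : M →ₗ[k] N) (t : M ⊗[k] k) :
    TensorProduct.rid k N (TensorProduct.map g LinearMap.id t)
      = g (TensorProduct.rid k M t) := by
  induction t using TensorProduct.induction_on with
  | zero => simp
  | tmul x r => simp
  | add x y hx hy => simp only [map_add, hx, hy]

theorem aux_comm_nat (f : M →ₗ[k] P) (g : N →ₗ[k] Q) (t : M ⊗[k] N) :
    TensorProduct.comm k P Q (TensorProduct.map f g t)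
      = TensorProduct.map g f (TensorProduct.comm k M N t) := by
  induction t using TensorProduct.induction_on with
  | zero => simp
  | tmul x y => simp
  | add x y hx hy => simp only [map_add, hx, hy]

theorem aux_map_equiv_cancel (e : M ≃ₗ[k] P) (f : N ≃ₗ[k] Q) (t : M ⊗[k] N) :
    TensorProduct.map e.symm.toLinearMap f.symm.toLinearMap
      (TensorProduct.map e.toLinearMap f.toLinearMap t) = t := by
  rw [aux_map_map]
  have h1 : (e.symm.toLinearMap).comp e.toLinearMap = LinearMap.id := by ext x; simp
  have h2 : (f.symm.toLinearMap).comp f.toLinearMap = LinearMap.id := by ext x; simp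
  rw [h1, h2, TensorProduct.map_id, LinearMap.id_apply]

theorem aux_map_equiv_cancel' (e : M ≃ₗ[k] P) (f : N ≃ₗ[k] Q) (t : P ⊗[k] Q) :
    TensorProduct.map e.toLinearMap f.toLinearMap
      (TensorProduct.map e.symm.toLinearMap f.symm.toLinearMap t) = t := by
  rw [aux_map_map]
  have h1 : (e.toLinearMap).comp e.symm.toLinearMap = LinearMap.id := by ext x; simp
  have h2 : (f.toLinearMap).comp f.symm.toLinearMap = LinearMap.id := by ext x; simp
  rw [h1, h2, TensorProduct.map_id, LinearMap.id_apply]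

end TensorHelpers

end AuxDev
section HopfAux

open TensorProduct LinearMap

namespace HomHopfAlgebra

variable {k : Type v} [CommRing k] {H : Type u} [AddCommGroup H] [Module k H]

/-- The automorphism as a linear map. -/
def a (Hh : HomHopfAlgebra k H) : H →ₗ[k] H := Hh.aut.toLinearMap
/-- The inverse automorphism as a linear map. -/
def ai (Hh : HomHopfAlgebra k H) : H →ₗ[k] H := Hh.aut.symm.toLinearMap
/-- Multiplication as a map on the tensor square. -/
noncomputable def mH (Hh : HomHopfAlgebra k H) : H ⊗[k] H →ₗ[k] H := TensorProduct.lift Hh.mul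
/-- Componentwise multiplication on `H ⊗ H`. -/
noncomputable def mB (Hh : HomHopfAlgebra k H) : (H ⊗[k] H) ⊗[k] (H ⊗[k] H) →ₗ[k] H ⊗[k] H :=
  TensorProduct.lift (biTensor Hh.mul Hh.mul)

variable (Hh : HomHopfAlgebra k H)

@[simp] theorem a_apply (h : H) : Hh.a h = Hh.aut h := rfl
@[simp] theorem ai_apply (h : H) : Hh.ai h = Hh.aut.symm h := rfl
@[simp] theorem mH_tmul (x y : H) : Hh.mH (x ⊗ₜ[k] y) = Hh.mul x y := rfl
theorem mB_tmul (x y : H ⊗[k] H) : Hh.mB (x ⊗ₜ[k] y) = biTensor Hh.mul Hh.mul x y := rfl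
@[simp] theorem mB_tmul_tmul (x y z w : H) :
    Hh.mB ((x ⊗ₜ[k] y) ⊗ₜ[k] (z ⊗ₜ[k] w)) = Hh.mul x z ⊗ₜ[k] Hh.mul y w := by
  rw [mB_tmul, aux_biTensor_tmul, TensorProduct.map_tmul]

theorem counit_ai (h : H) : Hh.counit (Hh.aut.symm h) = Hh.counit h := by
  conv_rhs => rw [← Hh.aut.apply_symm_apply h, Hh.counit_aut]

theorem antipode_ai (h : H) : Hh.antipode (Hh.aut.symm h) = Hh.aut.symm (Hh.antipode h) := by
  apply Hh.aut.injective
  rw [← Hh.antipode_aut, Hh.aut.apply_symm_apply, Hh.aut.apply_symm_apply]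

theorem comul_a (h : H) : Hh.comul (Hh.aut h) = TensorProduct.map Hh.a Hh.a (Hh.comul h) :=
  Hh.comul_aut h

theorem comul_ai (h : H) :
    Hh.comul (Hh.aut.symm h) = TensorProduct.map Hh.ai Hh.ai (Hh.comul h) := by
  have h1 := Hh.comul_aut (Hh.aut.symm h)
  rw [Hh.aut.apply_symm_apply] at h1
  calc Hh.comul (Hh.aut.symm h)
      = TensorProduct.map Hh.ai Hh.ai
          (TensorProduct.map Hh.aut.toLinearMap Hh.aut.toLinearMap
            (Hh.comul (Hh.aut.symm h))) := (aux_map_equiv_cancel Hh.aut Hh.aut _).symm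
    _ = TensorProduct.map Hh.ai Hh.ai (Hh.comul h) := by rw [← h1]

/-- Generalized left counit collapse. -/
theorem counit_collapse_left {V : Type*} [AddCommGroup V] [Module k V]
    (g : H →ₗ[k] V) (c : H) :
    TensorProduct.lid k V (TensorProduct.map Hh.counit g (Hh.comul c))
      = g (Hh.aut.symm c) := by
  have h1 : TensorProduct.map Hh.counit g (Hh.comul c)
      = TensorProduct.map LinearMap.id g
          (TensorProduct.map Hh.counit LinearMap.id (Hh.comul c)) := by
    rw [aux_map_map]; congr 1 <;> ext x <;> simp
  rw [h1, aux_lid_nat, Hh.counit_comul_left]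

/-- Generalized right counit collapse. -/
theorem counit_collapse_right {V : Type*} [AddCommGroup V] [Module k V]
    (g : H →ₗ[k] V) (c : H) :
    TensorProduct.rid k V (TensorProduct.map g Hh.counit (Hh.comul c))
      = g (Hh.aut.symm c) := by
  have h1 : TensorProduct.map g Hh.counit (Hh.comul c)
      = TensorProduct.map g LinearMap.id
          (TensorProduct.map LinearMap.id Hh.counit (Hh.comul c)) := by
    rw [aux_map_map]; congr 1 <;> ext x <;> simp
  rw [h1, aux_rid_nat, Hh.counit_comul_right]

/-- `Δ ∘ α⁻¹ = (α⁻¹ ⊗ α) ∘ Δ` : a consequence of the axioms. -/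
theorem comul_ai' (c : H) :
    Hh.comul (Hh.aut.symm c) = TensorProduct.map Hh.ai Hh.a (Hh.comul c) := by
  have hax := Hh.hom_coassoc c
  -- apply (lid) ∘ (map counit id) to both sides
  have hL : TensorProduct.lid k (H ⊗[k] H)
        (TensorProduct.map Hh.counit LinearMap.id
          (TensorProduct.map Hh.aut.symm.toLinearMap Hh.comul (Hh.comul c)))
      = Hh.comul (Hh.aut.symm c) := by
    rw [aux_map_map]
    have : Hh.counit.comp Hh.aut.symm.toLinearMap = Hh.counit := by
      ext x; exact Hh.counit_ai x
    rw [this, LinearMap.id_comp]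
    exact Hh.counit_collapse_left Hh.comul c
  have hR : TensorProduct.lid k (H ⊗[k] H)
        (TensorProduct.map Hh.counit LinearMap.id
          ((TensorProduct.assoc k H H H)
            (TensorProduct.map Hh.comul Hh.aut.toLinearMap (Hh.comul c))))
      = TensorProduct.map Hh.ai Hh.a (Hh.comul c) := by
    have hgen : ∀ t : (H ⊗[k] H) ⊗[k] H,
        TensorProduct.lid k (H ⊗[k] H)
          (TensorProduct.map Hh.counit LinearMap.id ((TensorProduct.assoc k H H H) t))
        = TensorProduct.map
            ((TensorProduct.lid k H).toLinearMap.comp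
              (TensorProduct.map Hh.counit LinearMap.id)) LinearMap.id t := by
      intro t
      induction t using TensorProduct.induction_on with
      | zero => simp
      | tmul x y =>
        induction x using TensorProduct.induction_on with
        | zero => simp
        | tmul u v => simp [TensorProduct.smul_tmul']
        | add u v hu hv =>
          simp only [TensorProduct.add_tmul, map_add, hu, hv]
      | add x y hx hy => simp only [map_add, hx, hy]
    rw [hgen, aux_map_map, LinearMap.id_comp]
    have : (((TensorProduct.lid k H).toLinearMap.comp
        (TensorProduct.map Hh.counit LinearMap.id)).comp Hh.comul) = Hh.ai := by
      ext x
      simp only [LinearMap.comp_apply, LinearEquiv.coe_coe, ai_apply]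
      exact Hh.counit_comul_left x
    rw [this]
    rfl
  rw [← hL, hax, hR]

/-- Degeneracy: `(id ⊗ α²) ∘ Δ = Δ`. -/
theorem comul_D (c : H) :
    TensorProduct.map LinearMap.id (Hh.a.comp Hh.a) (Hh.comul c) = Hh.comul c := by
  have h1 : TensorProduct.map Hh.ai Hh.a (Hh.comul c)
      = TensorProduct.map Hh.ai Hh.ai (Hh.comul c) := by
    rw [← comul_ai', comul_ai]
  have h2 := congrArg (TensorProduct.map Hh.a Hh.a) h1
  rw [aux_map_map, aux_map_map] at h2
  have ha : Hh.a.comp Hh.ai = LinearMap.id := by ext x; simp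
  rw [ha] at h2
  calc TensorProduct.map LinearMap.id (Hh.a.comp Hh.a) (Hh.comul c)
      = TensorProduct.map LinearMap.id LinearMap.id (Hh.comul c) := h2
    _ = Hh.comul c := by rw [TensorProduct.map_id]; rfl

theorem comul_Dinv (c : H) :
    TensorProduct.map LinearMap.id (Hh.ai.comp Hh.ai) (Hh.comul c) = Hh.comul c := by
  have := congrArg (TensorProduct.map LinearMap.id (Hh.ai.comp Hh.ai)) (Hh.comul_D c)
  rw [aux_map_map] at this
  have h1 : (Hh.ai.comp Hh.ai).comp (Hh.a.comp Hh.a) = LinearMap.id := by ext x; simp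
  rw [LinearMap.id_comp, h1] at this
  rw [this.symm]
  rw [TensorProduct.map_id, LinearMap.id_apply]

theorem comul_D2 (c : H) :
    TensorProduct.map LinearMap.id (Hh.a.comp (Hh.a.comp (Hh.a.comp Hh.a)))
      (Hh.comul c) = Hh.comul c := by
  have h0 : TensorProduct.map LinearMap.id (Hh.a.comp (Hh.a.comp (Hh.a.comp Hh.a))) (Hh.comul c)
      = TensorProduct.map LinearMap.id (Hh.a.comp Hh.a)
          (TensorProduct.map LinearMap.id (Hh.a.comp Hh.a) (Hh.comul c)) := by
    rw [aux_map_map]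
    have e1 : (LinearMap.id : H →ₗ[k] H).comp LinearMap.id = LinearMap.id := by ext x; rfl
    have e2 : (Hh.a.comp Hh.a).comp (Hh.a.comp Hh.a)
        = Hh.a.comp (Hh.a.comp (Hh.a.comp Hh.a)) := by ext x; rfl
    rw [e1, e2]
  rw [h0, Hh.comul_D, Hh.comul_D]

theorem comul_Dinv2 (c : H) :
    TensorProduct.map LinearMap.id (Hh.ai.comp (Hh.ai.comp (Hh.ai.comp Hh.ai)))
      (Hh.comul c) = Hh.comul c := by
  have h0 : TensorProduct.map LinearMap.id (Hh.ai.comp (Hh.ai.comp (Hh.ai.comp Hh.ai))) (Hh.comul c)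
      = TensorProduct.map LinearMap.id (Hh.ai.comp Hh.ai)
          (TensorProduct.map LinearMap.id (Hh.ai.comp Hh.ai) (Hh.comul c)) := by
    rw [aux_map_map]
    have e1 : (LinearMap.id : H →ₗ[k] H).comp LinearMap.id = LinearMap.id := by ext x; rfl
    have e2 : (Hh.ai.comp Hh.ai).comp (Hh.ai.comp Hh.ai)
        = Hh.ai.comp (Hh.ai.comp (Hh.ai.comp Hh.ai)) := by ext x; rfl
    rw [e1, e2]
  rw [h0, Hh.comul_Dinv, Hh.comul_Dinv]

end HomHopfAlgebra

end HopfAux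
section HopfAux2

open TensorProduct LinearMap

namespace HomHopfAlgebra

variable {k : Type v} [CommRing k] {H : Type u} [AddCommGroup H] [Module k H]
variable (Hh : HomHopfAlgebra k H)

theorem ai_one : Hh.aut.symm Hh.one = Hh.one := by
  apply Hh.aut.injective; rw [Hh.aut.apply_symm_apply, Hh.aut_one]

theorem mB_one_left (x : H ⊗[k] H) :
    Hh.mB ((Hh.one ⊗ₜ[k] Hh.one) ⊗ₜ[k] x) = TensorProduct.map Hh.a Hh.a x := by
  induction x using TensorProduct.induction_on with
  | zero => simp
  | tmul c d => simp [Hh.one_mul]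
  | add c d hc hd => rw [TensorProduct.tmul_add, map_add, hc, hd, map_add]

theorem mB_one_right (x : H ⊗[k] H) :
    Hh.mB (x ⊗ₜ[k] (Hh.one ⊗ₜ[k] Hh.one)) = TensorProduct.map Hh.a Hh.a x := by
  induction x using TensorProduct.induction_on with
  | zero => simp
  | tmul c d => simp [Hh.mul_one]
  | add c d hc hd => rw [TensorProduct.add_tmul, map_add, hc, hd, map_add]

theorem mB_assoc (x y z : H ⊗[k] H) :
    Hh.mB (Hh.mB (x ⊗ₜ[k] y) ⊗ₜ[k] TensorProduct.map Hh.a Hh.a z)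
      = Hh.mB (TensorProduct.map Hh.a Hh.a x ⊗ₜ[k] Hh.mB (y ⊗ₜ[k] z)) := by
  induction x using TensorProduct.induction_on with
  | zero => simp
  | add u v hu hv =>
    simp only [TensorProduct.add_tmul, TensorProduct.tmul_add, map_add, hu, hv]
  | tmul x1 x2 =>
    induction y using TensorProduct.induction_on with
    | zero => simp
    | add u v hu hv =>
      simp only [TensorProduct.add_tmul, TensorProduct.tmul_add, map_add, hu, hv]
    | tmul y1 y2 =>
      induction z using TensorProduct.induction_on with
      | zero => simp
      | add u v hu hv =>
        simp only [TensorProduct.add_tmul, TensorProduct.tmul_add, map_add, hu, hv]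
      | tmul z1 z2 => simp [Hh.hom_assoc]

theorem mH_aa (t : H ⊗[k] H) : Hh.mH (TensorProduct.map Hh.a Hh.a t) = Hh.aut (Hh.mH t) := by
  induction t using TensorProduct.induction_on with
  | zero => simp
  | tmul x y => simp [Hh.aut_mul]
  | add u v hu hv => rw [map_add, map_add, hu, hv, map_add, map_add]

theorem mH_aiai (t : H ⊗[k] H) :
    Hh.mH (TensorProduct.map Hh.ai Hh.ai t) = Hh.aut.symm (Hh.mH t) := by
  apply Hh.aut.injective
  rw [← mH_aa, Hh.aut.apply_symm_apply]
  exact congrArg Hh.mH (aux_map_equiv_cancel' Hh.aut Hh.aut t)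

theorem comul_mH (t : H ⊗[k] H) :
    Hh.comul (Hh.mH t) = Hh.mB (TensorProduct.map Hh.comul Hh.comul t) := by
  induction t using TensorProduct.induction_on with
  | zero => simp
  | tmul x y => simpa [mB_tmul] using Hh.comul_mul x y
  | add u v hu hv => rw [map_add, map_add, hu, hv, map_add, map_add]

theorem antipode_left (h : H) :
    Hh.mH (TensorProduct.map Hh.antipode LinearMap.id (Hh.comul h))
      = Hh.counit h • Hh.one := Hh.antipode_convolution h

theorem antipode_right (h : H) :
    Hh.mH (TensorProduct.map LinearMap.id Hh.antipode (Hh.comul h))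
      = Hh.counit h • Hh.one := Hh.convolution_antipode h

/-- `Σ α(e₁) S(α⁻¹ e₂) = ε(e) 1`. -/
theorem antipode_tw1 (e : H) :
    Hh.mH (TensorProduct.map Hh.a (Hh.antipode.comp Hh.ai) (Hh.comul e))
      = Hh.counit e • Hh.one := by
  have c1 : (Hh.antipode.comp Hh.ai).comp (Hh.a.comp Hh.a) = Hh.a.comp Hh.antipode := by
    ext x
    simp only [LinearMap.comp_apply, ai_apply, a_apply]
    rw [Hh.aut.symm_apply_apply, Hh.antipode_aut]
  have h1 : TensorProduct.map Hh.a (Hh.antipode.comp Hh.ai) (Hh.comul e)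
      = TensorProduct.map Hh.a Hh.a
          (TensorProduct.map LinearMap.id Hh.antipode (Hh.comul e)) := by
    conv_lhs => rw [← Hh.comul_D e]
    rw [aux_map_map, c1, aux_map_map, LinearMap.comp_id]
  rw [h1, Hh.mH_aa, Hh.antipode_right]
  simp [Hh.aut_one]

/-- `Σ d₁ S(α⁴ d₂) = ε(d) 1`. -/
theorem antipode_tw2 (d : H) :
    Hh.mH (TensorProduct.map LinearMap.id
        (Hh.antipode.comp (Hh.a.comp (Hh.a.comp (Hh.a.comp Hh.a)))) (Hh.comul d))
      = Hh.counit d • Hh.one := by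
  have h1 : TensorProduct.map LinearMap.id
        (Hh.antipode.comp (Hh.a.comp (Hh.a.comp (Hh.a.comp Hh.a)))) (Hh.comul d)
      = TensorProduct.map LinearMap.id Hh.antipode
          (TensorProduct.map LinearMap.id (Hh.a.comp (Hh.a.comp (Hh.a.comp Hh.a)))
            (Hh.comul d)) := by
    rw [aux_map_map, LinearMap.id_comp]
  rw [h1, Hh.comul_D2, antipode_right]

/-- `Σ α⁻¹(c₁) S(α c₂) = ε(c) 1`. -/
theorem antipode_tw3 (c : H) :
    Hh.mH (TensorProduct.map Hh.ai (Hh.antipode.comp Hh.a) (Hh.comul c))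
      = Hh.counit c • Hh.one := by
  have c1 : (Hh.antipode.comp Hh.a).comp (Hh.ai.comp Hh.ai) = Hh.ai.comp Hh.antipode := by
    ext x
    simp only [LinearMap.comp_apply, ai_apply, a_apply]
    rw [Hh.aut.apply_symm_apply, Hh.antipode_ai]
  have h1 : TensorProduct.map Hh.ai (Hh.antipode.comp Hh.a) (Hh.comul c)
      = TensorProduct.map Hh.ai Hh.ai
          (TensorProduct.map LinearMap.id Hh.antipode (Hh.comul c)) := by
    conv_lhs => rw [← Hh.comul_Dinv c]
    rw [aux_map_map, c1, aux_map_map, LinearMap.comp_id]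
  rw [h1, Hh.mH_aiai, Hh.antipode_right]
  simp [Hh.ai_one]

end HomHopfAlgebra

end HopfAux2
section HopfAux3

open TensorProduct LinearMap

namespace HomHopfAlgebra

variable {k : Type v} [CommRing k] {H : Type u} [AddCommGroup H] [Module k H]

/-- Convolution product on maps `H → H ⊗ H`. -/
noncomputable def conv (Hh : HomHopfAlgebra k H) (f g : H →ₗ[k] H ⊗[k] H) :
    H →ₗ[k] H ⊗[k] H :=
  Hh.mB.comp ((TensorProduct.map f g).comp Hh.comul)

/-- Convolution unit. -/
noncomputable def uconv (Hh : HomHopfAlgebra k H) : H →ₗ[k] H ⊗[k] H :=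
  Hh.counit.smulRight (Hh.one ⊗ₜ[k] Hh.one)

/-- `F = Δ ∘ S`. -/
noncomputable def acoF (Hh : HomHopfAlgebra k H) : H →ₗ[k] H ⊗[k] H :=
  Hh.comul.comp Hh.antipode

/-- `G = τ ∘ (S ⊗ S) ∘ Δ`. -/
noncomputable def acoG (Hh : HomHopfAlgebra k H) : H →ₗ[k] H ⊗[k] H :=
  ((TensorProduct.comm k H H).toLinearMap.comp
    (TensorProduct.map Hh.antipode Hh.antipode)).comp Hh.comul

variable (Hh : HomHopfAlgebra k H)

theorem conv_apply (f g : H →ₗ[k] H ⊗[k] H) (c : H) :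
    Hh.conv f g c = Hh.mB (TensorProduct.map f g (Hh.comul c)) := rfl

theorem uconv_apply (c : H) : Hh.uconv c = Hh.counit c • (Hh.one ⊗ₜ[k] Hh.one) := rfl

theorem a_comp_ai : Hh.a.comp Hh.ai = (LinearMap.id : H →ₗ[k] H) := by ext x; simp

theorem ai_comp_a : Hh.ai.comp Hh.a = (LinearMap.id : H →ₗ[k] H) := by ext x; simp

theorem map_aiai_aa (t : H ⊗[k] H) :
    TensorProduct.map Hh.ai Hh.ai (TensorProduct.map Hh.a Hh.a t) = t := by
  rw [aux_map_map, Hh.ai_comp_a, TensorProduct.map_id, LinearMap.id_apply]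

theorem map_aa_aiai (t : H ⊗[k] H) :
    TensorProduct.map Hh.a Hh.a (TensorProduct.map Hh.ai Hh.ai t) = t := by
  rw [aux_map_map, Hh.a_comp_ai, TensorProduct.map_id, LinearMap.id_apply]

theorem comul_comp_a : Hh.comul.comp Hh.a
    = (TensorProduct.map Hh.a Hh.a).comp Hh.comul := by
  apply LinearMap.ext; intro x
  simp only [LinearMap.comp_apply, a_apply]
  exact Hh.comul_aut x

/-- `hom_coassoc` with `a`/`ai` spelled out. -/
theorem hom_coassoc' (c : H) :
    TensorProduct.map Hh.ai Hh.comul (Hh.comul c)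
      = TensorProduct.assoc k H H H (TensorProduct.map Hh.comul Hh.a (Hh.comul c)) :=
  Hh.hom_coassoc c

/-- Convolution identity `F * Δ = u`. -/
theorem conv_F_comul (c : H) :
    Hh.conv Hh.acoF Hh.comul c = Hh.counit c • (Hh.one ⊗ₜ[k] Hh.one) := by
  have h1 : TensorProduct.map Hh.acoF Hh.comul (Hh.comul c)
      = TensorProduct.map Hh.comul Hh.comul
          (TensorProduct.map Hh.antipode LinearMap.id (Hh.comul c)) := by
    rw [aux_map_map, LinearMap.comp_id]; rfl
  rw [conv_apply, h1, ← Hh.comul_mH, Hh.antipode_left, map_smul, Hh.comul_one]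

/-- Convolution identity `Δ * G = u`. -/
theorem conv_comul_G (c : H) :
    Hh.conv Hh.comul Hh.acoG c = Hh.counit c • (Hh.one ⊗ₜ[k] Hh.one) := by
  set Gin : H ⊗[k] H →ₗ[k] H ⊗[k] H :=
    (TensorProduct.comm k H H).toLinearMap.comp
      (TensorProduct.map Hh.antipode Hh.antipode) with hGin
  have step1 : Hh.conv Hh.comul Hh.acoG c
      = Hh.mB (TensorProduct.map Hh.comul Gin
          (TensorProduct.map LinearMap.id Hh.comul (Hh.comul c))) := by
    rw [conv_apply, aux_map_map, LinearMap.comp_id]; rfl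
  have step2 : TensorProduct.map LinearMap.id Hh.comul (Hh.comul c)
      = TensorProduct.map Hh.a LinearMap.id
          ((TensorProduct.assoc k H H H)
            (TensorProduct.map Hh.comul Hh.a (Hh.comul c))) := by
    have e := congrArg
      (TensorProduct.map Hh.a (LinearMap.id : H ⊗[k] H →ₗ[k] H ⊗[k] H))
      (Hh.hom_coassoc' c)
    rw [aux_map_map, Hh.a_comp_ai, LinearMap.id_comp] at e
    exact e
  have N1 : ∀ (d v : H),
      Hh.mB (TensorProduct.map Hh.comul Gin
        (TensorProduct.map Hh.a LinearMap.id
          ((TensorProduct.assoc k H H H) (Hh.comul d ⊗ₜ[k] Hh.aut v))))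
      = Hh.mul (Hh.aut.symm d) (Hh.antipode (Hh.aut v)) ⊗ₜ[k] Hh.one := by
    intro d v
    set mkv : H →ₗ[k] H ⊗[k] H := (TensorProduct.mk k H H).flip (Hh.aut v) with hmkv
    set W : H →ₗ[k] H ⊗[k] H := (Gin.comp mkv).comp Hh.ai with hW
    set g' : H →ₗ[k] H ⊗[k] H :=
      ((TensorProduct.mk k H H).flip Hh.one).comp
        ((Hh.mul.flip (Hh.antipode (Hh.aut v))).comp Hh.a) with hg'
    have Th' : ∀ t : H ⊗[k] H,
        Hh.mB (TensorProduct.map (TensorProduct.map Hh.a Hh.a) W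
          ((TensorProduct.assoc k H H H).symm
            (TensorProduct.map LinearMap.id Hh.comul t)))
        = TensorProduct.rid k (H ⊗[k] H) (TensorProduct.map g' Hh.counit t) := by
      intro t
      induction t using TensorProduct.induction_on with
      | zero => simp
      | add x y hx hy => simp only [map_add, hx, hy]
      | tmul p e =>
        have In1 : ∀ s : H ⊗[k] H,
            Hh.mB (TensorProduct.map
                ((TensorProduct.map Hh.a Hh.a).comp (TensorProduct.mk k H H p)) W s)
              = TensorProduct.mk k H H (Hh.mul (Hh.aut p) (Hh.antipode (Hh.aut v)))
                  (Hh.mH (TensorProduct.map Hh.a (Hh.antipode.comp Hh.ai) s)) := by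
          intro s
          induction s using TensorProduct.induction_on with
          | zero => simp
          | add x y hx hy => simp only [map_add, hx, hy]
          | tmul u w => simp [hW, hmkv, hGin]
        calc Hh.mB (TensorProduct.map (TensorProduct.map Hh.a Hh.a) W
              ((TensorProduct.assoc k H H H).symm
                (TensorProduct.map LinearMap.id Hh.comul (p ⊗ₜ[k] e))))
            = Hh.mB (TensorProduct.map (TensorProduct.map Hh.a Hh.a) W
                ((TensorProduct.assoc k H H H).symm (p ⊗ₜ[k] Hh.comul e))) := by
              rw [TensorProduct.map_tmul, LinearMap.id_apply]
          _ = Hh.mB (TensorProduct.map (TensorProduct.map Hh.a Hh.a) W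
                (TensorProduct.map (TensorProduct.mk k H H p) LinearMap.id
                  (Hh.comul e))) := by rw [aux_assoc_symm_tmul_right]
          _ = Hh.mB (TensorProduct.map
                ((TensorProduct.map Hh.a Hh.a).comp (TensorProduct.mk k H H p))
                W (Hh.comul e)) := by rw [aux_map_map, LinearMap.comp_id]
          _ = TensorProduct.mk k H H (Hh.mul (Hh.aut p) (Hh.antipode (Hh.aut v)))
                (Hh.mH (TensorProduct.map Hh.a (Hh.antipode.comp Hh.ai)
                  (Hh.comul e))) := In1 _
          _ = TensorProduct.mk k H H (Hh.mul (Hh.aut p) (Hh.antipode (Hh.aut v)))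
                (Hh.counit e • Hh.one) := by rw [Hh.antipode_tw1]
          _ = TensorProduct.rid k (H ⊗[k] H)
                (TensorProduct.map g' Hh.counit (p ⊗ₜ[k] e)) := by
              simp [hg', TensorProduct.tmul_smul]
    have hW2 : Gin.comp mkv = W.comp Hh.a := by
      rw [hW]; ext x
      simp only [LinearMap.comp_apply, ai_apply, a_apply, LinearEquiv.symm_apply_apply]
    calc Hh.mB (TensorProduct.map Hh.comul Gin
          (TensorProduct.map Hh.a LinearMap.id
            ((TensorProduct.assoc k H H H) (Hh.comul d ⊗ₜ[k] Hh.aut v))))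
        = Hh.mB (TensorProduct.map Hh.comul Gin
            (TensorProduct.map Hh.a LinearMap.id
              (TensorProduct.map LinearMap.id mkv (Hh.comul d)))) := by
          rw [aux_assoc_tmul_left, ← hmkv]
      _ = Hh.mB (TensorProduct.map Hh.comul Gin
            (TensorProduct.map Hh.a mkv (Hh.comul d))) := by
          rw [aux_map_map Hh.a LinearMap.id LinearMap.id mkv, LinearMap.comp_id,
            LinearMap.id_comp]
      _ = Hh.mB (TensorProduct.map (Hh.comul.comp Hh.a) (Gin.comp mkv)
            (Hh.comul d)) := by rw [aux_map_map]
      _ = Hh.mB (TensorProduct.map ((TensorProduct.map Hh.a Hh.a).comp Hh.comul)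
            (W.comp Hh.a) (Hh.comul d)) := by rw [comul_comp_a, hW2]
      _ = Hh.mB (TensorProduct.map (TensorProduct.map Hh.a Hh.a) W
            (TensorProduct.map Hh.comul Hh.a (Hh.comul d))) := by
          exact congrArg Hh.mB (aux_map_map _ _ _ _ _).symm
      _ = Hh.mB (TensorProduct.map (TensorProduct.map Hh.a Hh.a) W
            ((TensorProduct.assoc k H H H).symm
              (TensorProduct.map Hh.ai Hh.comul (Hh.comul d)))) := by
          have inv := congrArg (TensorProduct.assoc k H H H).symm (Hh.hom_coassoc' d)
          rw [LinearEquiv.symm_apply_apply] at inv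
          rw [← inv]
      _ = Hh.mB (TensorProduct.map (TensorProduct.map Hh.a Hh.a) W
            ((TensorProduct.assoc k H H H).symm
              (TensorProduct.map LinearMap.id Hh.comul
                (TensorProduct.map Hh.ai LinearMap.id (Hh.comul d))))) := by
          rw [aux_map_map, LinearMap.id_comp, LinearMap.comp_id]
      _ = TensorProduct.rid k (H ⊗[k] H)
            (TensorProduct.map g' Hh.counit
              (TensorProduct.map Hh.ai LinearMap.id (Hh.comul d))) := Th' _
      _ = TensorProduct.rid k (H ⊗[k] H)
            (TensorProduct.map (g'.comp Hh.ai) Hh.counit (Hh.comul d)) := by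
          rw [aux_map_map, LinearMap.comp_id]
      _ = (g'.comp Hh.ai) (Hh.aut.symm d) := Hh.counit_collapse_right _ d
      _ = Hh.mul (Hh.aut.symm d) (Hh.antipode (Hh.aut v)) ⊗ₜ[k] Hh.one := by
          simp [hg']
  set E1 : H ⊗[k] H →ₗ[k] H ⊗[k] H :=
    ((TensorProduct.mk k H H).flip Hh.one).comp
      (Hh.mH.comp (TensorProduct.map Hh.ai (Hh.antipode.comp Hh.a))) with hE1
  have N1map : Hh.mB.comp ((TensorProduct.map Hh.comul Gin).comp
        ((TensorProduct.map Hh.a LinearMap.id).comp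
          ((TensorProduct.assoc k H H H).toLinearMap.comp
            (TensorProduct.map Hh.comul Hh.a)))) = E1 := by
    apply TensorProduct.ext'
    intro d v
    simp only [LinearMap.comp_apply, TensorProduct.map_tmul, LinearEquiv.coe_coe, a_apply]
    rw [N1 d v]
    simp [hE1]
  calc Hh.conv Hh.comul Hh.acoG c
      = Hh.mB (TensorProduct.map Hh.comul Gin
          (TensorProduct.map LinearMap.id Hh.comul (Hh.comul c))) := step1
    _ = Hh.mB (TensorProduct.map Hh.comul Gin
          (TensorProduct.map Hh.a LinearMap.id
            ((TensorProduct.assoc k H H H)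
              (TensorProduct.map Hh.comul Hh.a (Hh.comul c))))) := by rw [step2]
    _ = E1 (Hh.comul c) := by simpa using LinearMap.congr_fun N1map (Hh.comul c)
    _ = Hh.mH (TensorProduct.map Hh.ai (Hh.antipode.comp Hh.a) (Hh.comul c))
          ⊗ₜ[k] Hh.one := by simp [hE1]
    _ = (Hh.counit c • Hh.one) ⊗ₜ[k] Hh.one := by rw [Hh.antipode_tw3]
    _ = Hh.counit c • (Hh.one ⊗ₜ[k] Hh.one) := by rw [TensorProduct.smul_tmul']

theorem conv_u_left (f : H →ₗ[k] H ⊗[k] H) (c : H) :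
    Hh.conv Hh.uconv f c
      = TensorProduct.map Hh.a Hh.a (f (Hh.aut.symm c)) := by
  have inner : ∀ t : H ⊗[k] H,
      Hh.mB (TensorProduct.map Hh.uconv f t)
        = TensorProduct.lid k (H ⊗[k] H)
            (TensorProduct.map Hh.counit
              ((TensorProduct.map Hh.a Hh.a).comp f) t) := by
    intro t
    induction t using TensorProduct.induction_on with
    | zero => simp
    | add x y hx hy => simp only [map_add, hx, hy]
    | tmul u w =>
      simp only [TensorProduct.map_tmul, uconv_apply, LinearMap.comp_apply, lid_tmul]
      rw [← TensorProduct.smul_tmul', map_smul, Hh.mB_one_left]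
  rw [conv_apply, inner, Hh.counit_collapse_left]
  rfl

theorem conv_u_right (f : H →ₗ[k] H ⊗[k] H) (c : H) :
    Hh.conv f Hh.uconv c
      = TensorProduct.map Hh.a Hh.a (f (Hh.aut.symm c)) := by
  have inner : ∀ t : H ⊗[k] H,
      Hh.mB (TensorProduct.map f Hh.uconv t)
        = TensorProduct.rid k (H ⊗[k] H)
            (TensorProduct.map ((TensorProduct.map Hh.a Hh.a).comp f) Hh.counit t) := by
    intro t
    induction t using TensorProduct.induction_on with
    | zero => simp
    | add x y hx hy => simp only [map_add, hx, hy]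
    | tmul u w =>
      simp only [TensorProduct.map_tmul, uconv_apply, LinearMap.comp_apply, rid_tmul]
      rw [TensorProduct.tmul_smul, map_smul, Hh.mB_one_right]
  rw [conv_apply, inner, Hh.counit_collapse_right]
  rfl

/-- Twisted associativity of convolution. -/
theorem conv_assoc (f g h : H →ₗ[k] H ⊗[k] H) (c : H) :
    Hh.conv (Hh.conv f g) h c
      = Hh.conv ((TensorProduct.map Hh.a Hh.a).comp (f.comp Hh.ai))
          (Hh.conv g ((TensorProduct.map Hh.ai Hh.ai).comp (h.comp Hh.ai))) c := by
  set f' : H →ₗ[k] H ⊗[k] H := (TensorProduct.map Hh.a Hh.a).comp (f.comp Hh.ai) with hf'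
  set h' : H →ₗ[k] H ⊗[k] H := (TensorProduct.map Hh.ai Hh.ai).comp (h.comp Hh.ai) with hh'
  have KK : ∀ t : H ⊗[k] H,
      Hh.mB (TensorProduct.map (Hh.mB.comp (TensorProduct.map f g)) h
        (TensorProduct.map LinearMap.id Hh.ai
          ((TensorProduct.assoc k H H H).symm
            (TensorProduct.map LinearMap.id Hh.comul t))))
      = Hh.mB (TensorProduct.map f' (Hh.mB.comp (TensorProduct.map g h'))
          (TensorProduct.map Hh.a Hh.comul t)) := by
    intro t
    induction t using TensorProduct.induction_on with
    | zero => simp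
    | add x y hx hy => simp only [map_add, hx, hy]
    | tmul p e =>
      have In2 : ∀ s : H ⊗[k] H,
          Hh.mB (TensorProduct.map
              ((Hh.mB.comp (TensorProduct.map f g)).comp (TensorProduct.mk k H H p))
              (h.comp Hh.ai) s)
            = Hh.mB (TensorProduct.map Hh.a Hh.a (f p)
                ⊗ₜ[k] Hh.mB (TensorProduct.map g h' s)) := by
        intro s
        induction s using TensorProduct.induction_on with
        | zero => simp
        | add x y hx hy =>
          simp only [map_add, TensorProduct.tmul_add, hx, hy]
        | tmul u w =>
          simp only [TensorProduct.map_tmul, LinearMap.comp_apply, TensorProduct.mk_apply,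
            hh', ai_apply]
          have hz := Hh.mB_assoc (f p) (g u)
            (TensorProduct.map Hh.ai Hh.ai (h (Hh.aut.symm w)))
          rw [Hh.map_aa_aiai] at hz
          exact hz
      calc Hh.mB (TensorProduct.map (Hh.mB.comp (TensorProduct.map f g)) h
            (TensorProduct.map LinearMap.id Hh.ai
              ((TensorProduct.assoc k H H H).symm
                (TensorProduct.map LinearMap.id Hh.comul (p ⊗ₜ[k] e)))))
          = Hh.mB (TensorProduct.map (Hh.mB.comp (TensorProduct.map f g)) h
              (TensorProduct.map LinearMap.id Hh.ai
                (TensorProduct.map (TensorProduct.mk k H H p) LinearMap.id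
                  (Hh.comul e)))) := by
            rw [TensorProduct.map_tmul, LinearMap.id_apply, aux_assoc_symm_tmul_right]
        _ = Hh.mB (TensorProduct.map
              ((Hh.mB.comp (TensorProduct.map f g)).comp (TensorProduct.mk k H H p))
              (h.comp Hh.ai) (Hh.comul e)) := by
            rw [aux_map_map, aux_map_map, LinearMap.comp_id, LinearMap.comp_id]
        _ = Hh.mB (TensorProduct.map Hh.a Hh.a (f p)
              ⊗ₜ[k] Hh.mB (TensorProduct.map g h' (Hh.comul e))) := In2 _
        _ = Hh.mB (TensorProduct.map f' (Hh.mB.comp (TensorProduct.map g h'))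
              (TensorProduct.map Hh.a Hh.comul (p ⊗ₜ[k] e))) := by
            simp only [TensorProduct.map_tmul, hf', LinearMap.comp_apply, a_apply,
              ai_apply, LinearEquiv.symm_apply_apply]
  have split2 : TensorProduct.map Hh.comul LinearMap.id (Hh.comul c)
      = TensorProduct.map LinearMap.id Hh.ai
          ((TensorProduct.assoc k H H H).symm
            (TensorProduct.map Hh.ai Hh.comul (Hh.comul c))) := by
    have inv := congrArg (TensorProduct.assoc k H H H).symm (Hh.hom_coassoc' c)
    rw [LinearEquiv.symm_apply_apply] at inv
    rw [inv, aux_map_map, Hh.ai_comp_a, LinearMap.id_comp]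
  have splitZ : TensorProduct.map Hh.ai Hh.comul (Hh.comul c)
      = TensorProduct.map LinearMap.id Hh.comul
          (TensorProduct.map Hh.ai LinearMap.id (Hh.comul c)) := by
    rw [aux_map_map, LinearMap.id_comp, LinearMap.comp_id]
  have splitR : TensorProduct.map LinearMap.id Hh.comul (Hh.comul c)
      = TensorProduct.map Hh.a Hh.comul
          (TensorProduct.map Hh.ai LinearMap.id (Hh.comul c)) := by
    rw [aux_map_map, Hh.a_comp_ai, LinearMap.comp_id]
  calc Hh.conv (Hh.conv f g) h c
      = Hh.mB (TensorProduct.map (Hh.mB.comp (TensorProduct.map f g)) h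
          (TensorProduct.map Hh.comul LinearMap.id (Hh.comul c))) := by
        rw [conv_apply, aux_map_map, LinearMap.comp_id]; rfl
    _ = Hh.mB (TensorProduct.map (Hh.mB.comp (TensorProduct.map f g)) h
          (TensorProduct.map LinearMap.id Hh.ai
            ((TensorProduct.assoc k H H H).symm
              (TensorProduct.map LinearMap.id Hh.comul
                (TensorProduct.map Hh.ai LinearMap.id (Hh.comul c)))))) := by
        rw [split2, splitZ]
    _ = Hh.mB (TensorProduct.map f' (Hh.mB.comp (TensorProduct.map g h'))
          (TensorProduct.map Hh.a Hh.comul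
            (TensorProduct.map Hh.ai LinearMap.id (Hh.comul c)))) := KK _
    _ = Hh.mB (TensorProduct.map f' (Hh.mB.comp (TensorProduct.map g h'))
          (TensorProduct.map LinearMap.id Hh.comul (Hh.comul c))) := by
        rw [← splitR]
    _ = Hh.conv f' (Hh.conv g h') c := by
        rw [conv_apply, aux_map_map, LinearMap.comp_id]; rfl

/-- Anti-comultiplicativity of the antipode (with the degeneracy twist). -/
theorem comul_antipode (y : H) :
    Hh.comul (Hh.antipode y)
      = TensorProduct.comm k H H
          (TensorProduct.map (Hh.antipode.comp (Hh.a.comp Hh.a))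
            (Hh.antipode.comp (Hh.a.comp Hh.a)) (Hh.comul y)) := by
  set h0 : H →ₗ[k] H ⊗[k] H := (TensorProduct.map Hh.a Hh.a).comp (Hh.acoG.comp Hh.a)
    with hh0def
  have L1map : Hh.conv Hh.acoF Hh.comul = Hh.uconv :=
    LinearMap.ext fun x => by rw [conv_F_comul, uconv_apply]
  have L2map : Hh.conv Hh.comul Hh.acoG = Hh.uconv :=
    LinearMap.ext fun x => by rw [conv_comul_G, uconv_apply]
  have hF : (TensorProduct.map Hh.a Hh.a).comp (Hh.acoF.comp Hh.ai) = Hh.acoF := by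
    apply LinearMap.ext; intro x
    simp only [LinearMap.comp_apply, acoF]
    calc TensorProduct.map Hh.a Hh.a (Hh.comul (Hh.antipode (Hh.ai x)))
        = Hh.comul (Hh.a (Hh.antipode (Hh.ai x))) :=
          (LinearMap.congr_fun Hh.comul_comp_a (Hh.antipode (Hh.ai x))).symm
      _ = Hh.comul (Hh.antipode x) := by
          simp only [a_apply, ai_apply]
          rw [← Hh.antipode_aut, Hh.aut.apply_symm_apply]
  have hh0 : (TensorProduct.map Hh.ai Hh.ai).comp (h0.comp Hh.ai) = Hh.acoG := by
    apply LinearMap.ext; intro x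
    simp only [LinearMap.comp_apply, hh0def, map_aiai_aa]
    rw [a_apply, ai_apply, Hh.aut.apply_symm_apply]
  have key : ∀ x, Hh.conv (Hh.conv Hh.acoF Hh.comul) h0 x
      = Hh.conv ((TensorProduct.map Hh.a Hh.a).comp (Hh.acoF.comp Hh.ai))
          (Hh.conv Hh.comul ((TensorProduct.map Hh.ai Hh.ai).comp (h0.comp Hh.ai))) x :=
    Hh.conv_assoc Hh.acoF Hh.comul h0
  have main : ∀ x, TensorProduct.map Hh.a Hh.a (h0 (Hh.aut.symm x))
      = TensorProduct.map Hh.a Hh.a (Hh.acoF (Hh.aut.symm x)) := by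
    intro x
    have e := key x
    rw [L1map, conv_u_left, hF, hh0, L2map, conv_u_right] at e
    exact e
  have main2 : h0 y = Hh.acoF y := by
    have e := main (Hh.aut y)
    rw [Hh.aut.symm_apply_apply] at e
    have := congrArg (TensorProduct.map Hh.ai Hh.ai) e
    rwa [map_aiai_aa, map_aiai_aa] at this
  -- unfold h0
  have expand : h0 y = TensorProduct.comm k H H
      (TensorProduct.map (Hh.antipode.comp (Hh.a.comp Hh.a))
        (Hh.antipode.comp (Hh.a.comp Hh.a)) (Hh.comul y)) := by
    have hSa : Hh.a.comp Hh.antipode = Hh.antipode.comp Hh.a := by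
      ext x; simp only [LinearMap.comp_apply, a_apply]; rw [Hh.antipode_aut]
    have hca : Hh.comul (Hh.a y) = TensorProduct.map Hh.a Hh.a (Hh.comul y) :=
      Hh.comul_aut y
    have hfin : Hh.a.comp (Hh.antipode.comp Hh.a)
        = Hh.antipode.comp (Hh.a.comp Hh.a) := by
      ext x; simp [Hh.antipode_aut]
    calc h0 y
        = TensorProduct.map Hh.a Hh.a
            ((TensorProduct.comm k H H)
              (TensorProduct.map Hh.antipode Hh.antipode (Hh.comul (Hh.a y)))) := rfl
      _ = TensorProduct.map Hh.a Hh.a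
            ((TensorProduct.comm k H H)
              (TensorProduct.map Hh.antipode Hh.antipode
                (TensorProduct.map Hh.a Hh.a (Hh.comul y)))) := by rw [hca]
      _ = TensorProduct.map Hh.a Hh.a
            ((TensorProduct.comm k H H)
              (TensorProduct.map (Hh.antipode.comp Hh.a) (Hh.antipode.comp Hh.a)
                (Hh.comul y))) := by rw [aux_map_map]
      _ = TensorProduct.map Hh.a Hh.a
            (TensorProduct.map (Hh.antipode.comp Hh.a) (Hh.antipode.comp Hh.a)
              ((TensorProduct.comm k H H) (Hh.comul y))) := by rw [aux_comm_nat]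
      _ = TensorProduct.map (Hh.antipode.comp (Hh.a.comp Hh.a))
            (Hh.antipode.comp (Hh.a.comp Hh.a))
            ((TensorProduct.comm k H H) (Hh.comul y)) := by rw [aux_map_map, hfin]
      _ = TensorProduct.comm k H H
            (TensorProduct.map (Hh.antipode.comp (Hh.a.comp Hh.a))
              (Hh.antipode.comp (Hh.a.comp Hh.a)) (Hh.comul y)) := by
          rw [aux_comm_nat]
  rw [← expand, main2]
  rfl

end HomHopfAlgebra

end HopfAux3
section ComodAux

open TensorProduct LinearMap

variable {k : Type v} [CommRing k]

theorem aux_assoc_rtwist {M N P S : Type*}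
    [AddCommGroup M] [Module k M] [AddCommGroup N] [Module k N]
    [AddCommGroup P] [Module k P] [AddCommGroup S] [Module k S]
    (h : P →ₗ[k] S) (t : (M ⊗[k] N) ⊗[k] P) :
    TensorProduct.assoc k M N S (TensorProduct.map LinearMap.id h t)
      = TensorProduct.map LinearMap.id (TensorProduct.map LinearMap.id h)
          (TensorProduct.assoc k M N P t) := by
  have hmap : (TensorProduct.assoc k M N S).toLinearMap.comp
        (TensorProduct.map LinearMap.id h)
      = (TensorProduct.map LinearMap.id (TensorProduct.map LinearMap.id h)).comp
          (TensorProduct.assoc k M N P).toLinearMap := by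
    apply TensorProduct.ext_threefold
    intro x y z
    simp
  simpa using LinearMap.congr_fun hmap t

namespace RelHopfModule

variable {H A : Type u} [AddCommGroup H] [Module k H] [AddCommGroup A] [Module k A]
  {Hh : HomHopfAlgebra k H} {AA : HomComoduleAlgebra k Hh A}
  {M : Type u} [AddCommGroup M] [Module k M] (T : RelHopfModule k Hh AA M)

/-- The module automorphism as a linear map. -/
noncomputable def mu : M →ₗ[k] M := T.aut.toLinearMap
/-- The inverse module automorphism as a linear map. -/
noncomputable def mui : M →ₗ[k] M := T.aut.symm.toLinearMap

@[simp] theorem mu_apply (m : M) : T.mu m = T.aut m := rfl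
@[simp] theorem mui_apply (m : M) : T.mui m = T.aut.symm m := rfl

theorem coact_a (m : M) :
    T.coact (T.aut m) = TensorProduct.map T.mu Hh.a (T.coact m) := T.coact_aut m

theorem coact_ai (m : M) :
    T.coact (T.aut.symm m) = TensorProduct.map T.mui Hh.ai (T.coact m) := by
  have h1 := T.coact_aut (T.aut.symm m)
  rw [T.aut.apply_symm_apply] at h1
  calc T.coact (T.aut.symm m)
      = TensorProduct.map T.mui Hh.ai
          (TensorProduct.map T.aut.toLinearMap Hh.aut.toLinearMap
            (T.coact (T.aut.symm m))) := (aux_map_equiv_cancel T.aut Hh.aut _).symm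
    _ = TensorProduct.map T.mui Hh.ai (T.coact m) := by rw [← h1]

theorem coact_coassoc' (m : M) :
    TensorProduct.assoc k M H H
        (TensorProduct.map T.coact Hh.ai (T.coact m))
      = TensorProduct.map T.mui Hh.comul (T.coact m) := T.hom_coassoc m

theorem ridEps : ((TensorProduct.rid k M).toLinearMap.comp
      (TensorProduct.map LinearMap.id Hh.counit)).comp T.coact = T.mui :=
  LinearMap.ext fun m => by simpa using T.counit_coact m

theorem mu_comp_mui : T.mu.comp T.mui = LinearMap.id := by ext x; simp

theorem mui_comp_mu : T.mui.comp T.mu = LinearMap.id := by ext x; simp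

/-- Degeneracy for Hom-comodules: `(id ⊗ α²) ∘ ρ = ρ`. -/
theorem coact_D (m : M) :
    TensorProduct.map LinearMap.id (Hh.a.comp Hh.a) (T.coact m) = T.coact m := by
  have hcomulD : TensorProduct.map LinearMap.id (Hh.a.comp Hh.a) ∘ₗ Hh.comul
      = Hh.comul := LinearMap.ext fun c => Hh.comul_D c
  have h1 : TensorProduct.map T.mui Hh.comul (T.coact m)
      = TensorProduct.map LinearMap.id
          (TensorProduct.map LinearMap.id (Hh.a.comp Hh.a))
          (TensorProduct.map T.mui Hh.comul (T.coact m)) := by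
    rw [aux_map_map, LinearMap.id_comp, hcomulD]
  have key : TensorProduct.map T.coact Hh.ai (T.coact m)
      = TensorProduct.map LinearMap.id (Hh.a.comp Hh.a)
          (TensorProduct.map T.coact Hh.ai (T.coact m)) := by
    apply (TensorProduct.assoc k M H H).injective
    rw [aux_assoc_rtwist, T.coact_coassoc']
    exact h1
  have key2 : TensorProduct.map T.coact Hh.ai (T.coact m)
      = TensorProduct.map T.coact Hh.a (T.coact m) := by
    have e3 : (Hh.a.comp Hh.a).comp Hh.ai = Hh.a := by ext x; simp
    rw [key, aux_map_map, LinearMap.id_comp, e3]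
  have h4 := congrArg (TensorProduct.map
      ((TensorProduct.rid k M).toLinearMap.comp
        (TensorProduct.map LinearMap.id Hh.counit)) (LinearMap.id : H →ₗ[k] H)) key2
  rw [aux_map_map, aux_map_map, LinearMap.id_comp, LinearMap.id_comp, T.ridEps] at h4
  have h5 := congrArg (TensorProduct.map T.mu Hh.a) h4
  rw [aux_map_map, aux_map_map, T.mu_comp_mui, Hh.a_comp_ai] at h5
  rw [TensorProduct.map_id, LinearMap.id_apply] at h5
  exact h5.symm

theorem coact_Dinv (m : M) :
    TensorProduct.map LinearMap.id (Hh.ai.comp Hh.ai) (T.coact m) = T.coact m := by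
  have := congrArg (TensorProduct.map LinearMap.id (Hh.ai.comp Hh.ai)) (T.coact_D m)
  rw [aux_map_map] at this
  have h1 : (Hh.ai.comp Hh.ai).comp (Hh.a.comp Hh.a) = LinearMap.id := by ext x; simp
  rw [LinearMap.id_comp, h1] at this
  rw [this.symm, TensorProduct.map_id, LinearMap.id_apply]

theorem coact_Dinv2 (m : M) :
    TensorProduct.map LinearMap.id (Hh.ai.comp (Hh.ai.comp (Hh.ai.comp Hh.ai)))
      (T.coact m) = T.coact m := by
  have h0 : TensorProduct.map LinearMap.id
        (Hh.ai.comp (Hh.ai.comp (Hh.ai.comp Hh.ai))) (T.coact m)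
      = TensorProduct.map LinearMap.id (Hh.ai.comp Hh.ai)
          (TensorProduct.map LinearMap.id (Hh.ai.comp Hh.ai) (T.coact m)) := by
    rw [aux_map_map]
    have e1 : (LinearMap.id : M →ₗ[k] M).comp LinearMap.id = LinearMap.id := by ext x; rfl
    have e2 : (Hh.ai.comp Hh.ai).comp (Hh.ai.comp Hh.ai)
        = Hh.ai.comp (Hh.ai.comp (Hh.ai.comp Hh.ai)) := by ext x; rfl
    rw [e1, e2]
  rw [h0, T.coact_Dinv, T.coact_Dinv]

end RelHopfModule

end ComodAux
section MainAux1

open TensorProduct LinearMap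

namespace HomHopfAlgebra

variable {k : Type v} [CommRing k] {H : Type u} [AddCommGroup H] [Module k H]
variable (Hh : HomHopfAlgebra k H)

/-- `(map id Δ)(Δ c) = (map a id)(assoc ((map Δ a)(Δ c)))`. -/
theorem comul_exp (c : H) :
    TensorProduct.map LinearMap.id Hh.comul (Hh.comul c)
      = TensorProduct.map Hh.a LinearMap.id
          ((TensorProduct.assoc k H H H)
            (TensorProduct.map Hh.comul Hh.a (Hh.comul c))) := by
  have e := congrArg
    (TensorProduct.map Hh.a (LinearMap.id : H ⊗[k] H →ₗ[k] H ⊗[k] H))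
    (Hh.hom_coassoc' c)
  rw [aux_map_map, Hh.a_comp_ai, LinearMap.id_comp] at e
  exact e

/-- Evaluation of `mB` against an opaque right factor. -/
theorem mB_left_eval (y₁ y₂ : H) (t : H ⊗[k] H) :
    Hh.mB ((y₁ ⊗ₜ[k] y₂) ⊗ₜ[k] t)
      = TensorProduct.map (Hh.mul y₁) (Hh.mul y₂) t := by
  induction t using TensorProduct.induction_on with
  | zero => simp
  | tmul p q => simp
  | add p q hp hq => rw [TensorProduct.tmul_add, map_add, hp, hq, map_add]

/-- `Σ α⁻¹(d₁) S(α³ d₂) = ε(d) 1`. -/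
theorem antipode_tw4 (d : H) :
    Hh.mH (TensorProduct.map Hh.ai
        (Hh.antipode.comp (Hh.a.comp (Hh.a.comp Hh.a))) (Hh.comul d))
      = Hh.counit d • Hh.one := by
  have c1 : Hh.ai.comp
      (Hh.antipode.comp (Hh.a.comp (Hh.a.comp (Hh.a.comp Hh.a))))
        = Hh.antipode.comp (Hh.a.comp (Hh.a.comp Hh.a)) := by
    ext x
    simp only [LinearMap.comp_apply, ai_apply, a_apply]
    rw [← Hh.antipode_ai]
    congr 1
    exact Hh.aut.symm_apply_apply _
  have h1 : TensorProduct.map Hh.ai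
        (Hh.antipode.comp (Hh.a.comp (Hh.a.comp Hh.a))) (Hh.comul d)
      = TensorProduct.map Hh.ai Hh.ai
          (TensorProduct.map LinearMap.id
            (Hh.antipode.comp (Hh.a.comp (Hh.a.comp (Hh.a.comp Hh.a))))
            (Hh.comul d)) := by
    rw [aux_map_map, c1, LinearMap.comp_id]
  rw [h1, Hh.mH_aiai, Hh.antipode_tw2]
  simp [Hh.ai_one]

/-- The collapse `Σ d₁ (S(α³ d₂) z) = ε(d) α²(z)`. -/
theorem hcollapse (d z : H) :
    Hh.mH (TensorProduct.map LinearMap.id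
        ((Hh.mul.flip z).comp (Hh.antipode.comp (Hh.a.comp (Hh.a.comp Hh.a))))
        (Hh.comul d))
      = Hh.counit d • Hh.aut (Hh.aut z) := by
  have step : ∀ s : H ⊗[k] H,
      Hh.mH (TensorProduct.map LinearMap.id
        ((Hh.mul.flip z).comp (Hh.antipode.comp (Hh.a.comp (Hh.a.comp Hh.a)))) s)
      = Hh.mul.flip (Hh.aut z)
          (Hh.mH (TensorProduct.map Hh.ai
            (Hh.antipode.comp (Hh.a.comp (Hh.a.comp Hh.a))) s)) := by
    intro s
    induction s using TensorProduct.induction_on with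
    | zero => simp
    | add p q hp hq => simp only [map_add, hp, hq]
    | tmul d1 d2 =>
      simp only [TensorProduct.map_tmul, LinearMap.comp_apply, LinearMap.id_apply,
        mH_tmul, LinearMap.flip_apply, ai_apply, a_apply]
      have := Hh.hom_assoc (Hh.aut.symm d1)
        (Hh.antipode (Hh.aut (Hh.aut (Hh.aut d2)))) z
      rw [Hh.aut.apply_symm_apply] at this
      exact this
  rw [step, Hh.antipode_tw4, map_smul, LinearMap.flip_apply]
  rw [Hh.one_mul]

end HomHopfAlgebra

namespace RelHopfModule

variable {k : Type v} [CommRing k] {H A : Type u}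
  [AddCommGroup H] [Module k H] [AddCommGroup A] [Module k A]
  {Hh : HomHopfAlgebra k H} {AA : HomComoduleAlgebra k Hh A}
  {M : Type u} [AddCommGroup M] [Module k M] (T : RelHopfModule k Hh AA M)

/-- The lifted compatibility map. -/
noncomputable def liftB : (M ⊗[k] H) ⊗[k] (A ⊗[k] H) →ₗ[k] M ⊗[k] H :=
  TensorProduct.lift (biTensor T.act Hh.mul)

@[simp] theorem liftB_tmul_tmul (m : M) (h : H) (a : A) (h' : H) :
    T.liftB ((m ⊗ₜ[k] h) ⊗ₜ[k] (a ⊗ₜ[k] h'))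
      = T.act m a ⊗ₜ[k] Hh.mul h h' := by
  simp [liftB, aux_biTensor_tmul]

/-- Evaluation of `liftB` against an opaque right factor. -/
theorem liftB_left_eval (m : M) (h : H) (t : A ⊗[k] H) :
    T.liftB ((m ⊗ₜ[k] h) ⊗ₜ[k] t)
      = TensorProduct.map (T.act m) (Hh.mul h) t := by
  induction t using TensorProduct.induction_on with
  | zero => simp
  | tmul a h' => simp
  | add p q hp hq => rw [TensorProduct.tmul_add, map_add, hp, hq, map_add]

theorem compat_lift (t : M ⊗[k] A) :
    T.coact (TensorProduct.lift T.act t)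
      = T.liftB (TensorProduct.map T.coact AA.coact t) := by
  induction t using TensorProduct.induction_on with
  | zero => simp
  | tmul m a =>
    simp only [TensorProduct.lift.tmul, TensorProduct.map_tmul]
    rw [T.compat m a]
    rfl
  | add p q hp hq => rw [map_add, map_add, hp, hq, map_add, map_add]

theorem coact_comp_mui : T.coact.comp T.mui
    = (TensorProduct.map T.mui Hh.ai).comp T.coact :=
  LinearMap.ext fun m => T.coact_ai m

end RelHopfModule

end MainAux1
section MainAux2

open TensorProduct LinearMap

theorem aux_map_zero_right {k : Type v} [CommRing k] {M N P Q : Type*}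
    [AddCommGroup M] [Module k M] [AddCommGroup N] [Module k N]
    [AddCommGroup P] [Module k P] [AddCommGroup Q] [Module k Q]
    (f : M →ₗ[k] P) : TensorProduct.map f (0 : N →ₗ[k] Q) = 0 := by
  rw [show (0 : N →ₗ[k] Q) = (0 : k) • (0 : N →ₗ[k] Q) by simp,
    TensorProduct.map_smul_right]
  simp

namespace HomHopfAlgebra

variable {k : Type v} [CommRing k] {H A : Type u}
  [AddCommGroup H] [Module k H] [AddCommGroup A] [Module k A]
variable (Hh : HomHopfAlgebra k H)

/-- `S ∘ α²`. -/
noncomputable def SA2 : H →ₗ[k] H := Hh.antipode.comp (Hh.a.comp Hh.a)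
/-- `S ∘ α³`. -/
noncomputable def SA3 : H →ₗ[k] H := Hh.antipode.comp (Hh.a.comp (Hh.a.comp Hh.a))
/-- `S ∘ α⁴`. -/
noncomputable def SA4 : H →ₗ[k] H :=
  Hh.antipode.comp (Hh.a.comp (Hh.a.comp (Hh.a.comp Hh.a)))
/-- `S ∘ α⁻¹`. -/
noncomputable def SAI : H →ₗ[k] H := Hh.antipode.comp Hh.ai

theorem SA2_a (w : H) : Hh.SA2 (Hh.a w) = Hh.SA3 w := rfl
theorem SA2_aa (v : H) : Hh.SA2 (Hh.a (Hh.a v)) = Hh.SA4 v := rfl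
theorem SA4_ai (c : H) : Hh.SA4 (Hh.aut.symm c) = Hh.SA3 c := by
  simp only [SA4, SA3, LinearMap.comp_apply, a_apply]
  rw [Hh.aut.apply_symm_apply]
theorem SA3_ai4 (y : H) :
    Hh.SA3 (Hh.aut.symm (Hh.aut.symm (Hh.aut.symm (Hh.aut.symm y)))) = Hh.SAI y := by
  simp only [SA3, SAI, LinearMap.comp_apply, a_apply, ai_apply]
  rw [Hh.aut.apply_symm_apply, Hh.aut.apply_symm_apply, Hh.aut.apply_symm_apply]

/-- The map `y ↦ φ(S(y) α(h))`. -/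
noncomputable def gmap (Φfn : H →ₗ[k] A) (h : H) : H →ₗ[k] A :=
  Φfn.comp (Hh.mH.comp
    (((TensorProduct.mk k H H).flip (Hh.a h)).comp Hh.antipode))

@[simp] theorem gmap_apply (Φfn : H →ₗ[k] A) (h y : H) :
    Hh.gmap Φfn h y = Φfn (Hh.mul (Hh.antipode y) (Hh.aut h)) := rfl

/-- `V_t : u ⊗ w ↦ φ(S(α²w) t₁) ⊗ S(α²u) t₂`. -/
noncomputable def Vt (Φfn : H →ₗ[k] A) (t : H ⊗[k] H) :
    H ⊗[k] H →ₗ[k] A ⊗[k] H :=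
  ((TensorProduct.map Φfn LinearMap.id).comp
      (Hh.mB.comp ((TensorProduct.mk k (H ⊗[k] H) (H ⊗[k] H)).flip t))).comp
    ((TensorProduct.comm k H H).toLinearMap.comp
      (TensorProduct.map Hh.SA2 Hh.SA2))

theorem Vt_eval (Φfn : H →ₗ[k] A) (t : H ⊗[k] H) (z₁ z₂ : H) :
    Hh.Vt Φfn t (z₁ ⊗ₜ[k] z₂)
      = TensorProduct.map (Φfn.comp (Hh.mul (Hh.SA2 z₂)))
          (Hh.mul (Hh.SA2 z₁)) t := by
  simp only [Vt, LinearMap.comp_apply, TensorProduct.map_tmul, LinearEquiv.coe_coe,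
    TensorProduct.comm_tmul, LinearMap.flip_apply, TensorProduct.mk_apply]
  rw [Hh.mB_left_eval, aux_map_map, LinearMap.id_comp]

/-- `n_t : c ↦ φ(S(α³c) t₁) ⊗ α²(t₂)`. -/
noncomputable def nt (Φfn : H →ₗ[k] A) (t : H ⊗[k] H) : H →ₗ[k] A ⊗[k] H :=
  (TensorProduct.map (Φfn.comp (Hh.mH.comp (TensorProduct.map Hh.SA3 LinearMap.id)))
      (Hh.a.comp Hh.a)).comp
    ((TensorProduct.assoc k H H H).symm.toLinearMap.comp
      ((TensorProduct.mk k H (H ⊗[k] H)).flip t))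

theorem nt_eval (Φfn : H →ₗ[k] A) (t : H ⊗[k] H) (c : H) :
    Hh.nt Φfn t c
      = TensorProduct.map (Φfn.comp (Hh.mul (Hh.SA3 c))) (Hh.a.comp Hh.a) t := by
  have hcomp : ((Φfn.comp (Hh.mH.comp (TensorProduct.map Hh.SA3 LinearMap.id))).comp
      (TensorProduct.mk k H H c)) = Φfn.comp (Hh.mul (Hh.SA3 c)) := by
    ext p
    simp [aux_map_map]
  simp only [nt, LinearMap.comp_apply, LinearMap.flip_apply, TensorProduct.mk_apply,
    LinearEquiv.coe_coe]
  rw [aux_assoc_symm_tmul_right, aux_map_map, hcomp, LinearMap.comp_id]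

end HomHopfAlgebra

namespace RelHopfModule

variable {k : Type v} [CommRing k] {H A : Type u}
  [AddCommGroup H] [Module k H] [AddCommGroup A] [Module k A]
  {Hh : HomHopfAlgebra k H} {AA : HomComoduleAlgebra k Hh A}
  {M : Type u} [AddCommGroup M] [Module k M] (T : RelHopfModule k Hh AA M)

theorem lamMap_tmul (Φfn : H →ₗ[k] A) (m : M) (h : H) :
    lamMap Φfn T (m ⊗ₜ[k] h)
      = TensorProduct.lift T.act
          (TensorProduct.map T.mui (Hh.gmap Φfn h) (T.coact m)) := by
  have e2 : ((Φfn.comp ((TensorProduct.lift Hh.mul).comp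
      (TensorProduct.map Hh.antipode Hh.aut.toLinearMap))).comp
      ((TensorProduct.mk k H H).flip h)) = Hh.gmap Φfn h := by
    ext y
    simp [HomHopfAlgebra.gmap, HomHopfAlgebra.mH]
  have e1 : (T.aut.symm.toLinearMap).comp (LinearMap.id : M →ₗ[k] M) = T.mui := by
    rw [LinearMap.comp_id]; rfl
  simp only [lamMap, LinearMap.comp_apply, LinearEquiv.coe_coe, TensorProduct.map_tmul,
    LinearMap.id_apply]
  rw [aux_assoc_tmul_left, aux_map_map, e1, e2]

/-- `P1_t = liftB ∘ (map (map μ⁻¹ α⁻¹) V_t)`. -/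
noncomputable def P1t (Φfn : H →ₗ[k] A) (t : H ⊗[k] H) :
    (M ⊗[k] H) ⊗[k] (H ⊗[k] H) →ₗ[k] M ⊗[k] H :=
  T.liftB.comp (TensorProduct.map (TensorProduct.map T.mui Hh.ai) (Hh.Vt Φfn t))

/-- `Q_t = P1_t ∘ (map id (Δ ∘ α)) ∘ assoc⁻¹`. -/
noncomputable def Qt (Φfn : H →ₗ[k] A) (t : H ⊗[k] H) :
    M ⊗[k] (H ⊗[k] H) →ₗ[k] M ⊗[k] H :=
  (T.P1t Φfn t).comp
    ((TensorProduct.map LinearMap.id (Hh.comul.comp Hh.a)).comp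
      (TensorProduct.assoc k M H H).symm.toLinearMap)

/-- The key computation. -/
theorem KS (Φfn : H →ₗ[k] A) (t : H ⊗[k] H) (x : M) (c : H) :
    T.Qt Φfn t (x ⊗ₜ[k] Hh.comul c)
      = TensorProduct.map (TensorProduct.lift T.act) LinearMap.id
          ((TensorProduct.assoc k M A H).symm
            (T.aut.symm x ⊗ₜ[k] Hh.nt Φfn t c)) := by
  set z : M := T.aut.symm x with hz
  -- Step 1: reduce to `liftB (map Fxa VGm (assoc ((map Δ a)(Δ c))))`
  have hFxa : (((TensorProduct.map T.mui Hh.ai).comp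
      (TensorProduct.mk k M H x)).comp Hh.a) = TensorProduct.mk k M H z := by
    ext w
    simp [hz]
  have step1 : T.Qt Φfn t (x ⊗ₜ[k] Hh.comul c)
      = T.liftB (TensorProduct.map
          ((TensorProduct.map T.mui Hh.ai).comp (TensorProduct.mk k M H x))
          ((Hh.Vt Φfn t).comp (Hh.comul.comp Hh.a)) (Hh.comul c)) := by
    simp only [Qt, P1t, LinearMap.comp_apply, LinearEquiv.coe_coe]
    rw [aux_assoc_symm_tmul_right, aux_map_map, aux_map_map, LinearMap.comp_id,
      LinearMap.comp_id]
  have step2 : T.liftB (TensorProduct.map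
        ((TensorProduct.map T.mui Hh.ai).comp (TensorProduct.mk k M H x))
        ((Hh.Vt Φfn t).comp (Hh.comul.comp Hh.a)) (Hh.comul c))
      = T.liftB (TensorProduct.map
          ((TensorProduct.map T.mui Hh.ai).comp (TensorProduct.mk k M H x))
          ((Hh.Vt Φfn t).comp (TensorProduct.map Hh.a Hh.a))
          (TensorProduct.map LinearMap.id Hh.comul (Hh.comul c))) := by
    rw [Hh.comul_comp_a, aux_map_map, LinearMap.comp_id]
    rfl
  have step3 : T.liftB (TensorProduct.map
        ((TensorProduct.map T.mui Hh.ai).comp (TensorProduct.mk k M H x))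
        ((Hh.Vt Φfn t).comp (TensorProduct.map Hh.a Hh.a))
        (TensorProduct.map LinearMap.id Hh.comul (Hh.comul c)))
      = T.liftB (TensorProduct.map
          (TensorProduct.mk k M H z)
          (((Hh.Vt Φfn t).comp (TensorProduct.map Hh.a Hh.a)).comp LinearMap.id)
          (TensorProduct.assoc k H H H
            (TensorProduct.map Hh.comul Hh.a (Hh.comul c)))) := by
    rw [Hh.comul_exp, aux_map_map, hFxa]
  -- the inner map-level identity, proved on pure tensors
  have INmap : ∀ (d v : H),
      T.liftB (TensorProduct.map
        (TensorProduct.mk k M H z)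
        (((Hh.Vt Φfn t).comp (TensorProduct.map Hh.a Hh.a)).comp LinearMap.id)
        (TensorProduct.assoc k H H H
          (TensorProduct.map Hh.comul Hh.a (d ⊗ₜ[k] v))))
      = Hh.counit d • (TensorProduct.map
          ((T.act z).comp (Φfn.comp (Hh.mul (Hh.SA4 v)))) (Hh.a.comp Hh.a)) t := by
    intro d v
    set cAv : H →ₗ[k] A := Φfn.comp (Hh.mul (Hh.SA4 v)) with hcAv
    set G1 : H →ₗ[k] A ⊗[k] H :=
      (((Hh.Vt Φfn t).comp (TensorProduct.map Hh.a Hh.a)).comp LinearMap.id).comp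
        ((TensorProduct.mk k H H).flip (Hh.a v)) with hG1def
    have hG1 : ∀ w : H, G1 w = TensorProduct.map cAv (Hh.mul (Hh.SA3 w)) t := by
      intro w
      simp only [hG1def, LinearMap.comp_apply, LinearMap.id_apply,
        LinearMap.flip_apply, TensorProduct.mk_apply, TensorProduct.map_tmul]
      rw [Hh.Vt_eval]
      rfl
    have start : T.liftB (TensorProduct.map
        (TensorProduct.mk k M H z)
        (((Hh.Vt Φfn t).comp (TensorProduct.map Hh.a Hh.a)).comp LinearMap.id)
        (TensorProduct.assoc k H H H
          (TensorProduct.map Hh.comul Hh.a (d ⊗ₜ[k] v))))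
        = T.liftB (TensorProduct.map (TensorProduct.mk k M H z) G1 (Hh.comul d)) := by
      rw [TensorProduct.map_tmul, aux_assoc_tmul_left, aux_map_map, LinearMap.comp_id,
        hG1def]
    have BRIDGE : ∀ s : H ⊗[k] H,
        T.liftB (TensorProduct.map (TensorProduct.mk k M H z) G1 s)
        = TensorProduct.map ((T.act z).comp cAv)
            ((Hh.mH.comp (TensorProduct.map LinearMap.id
                (Hh.mH.comp (TensorProduct.map Hh.SA3 LinearMap.id)))).comp
              ((TensorProduct.assoc k H H H).toLinearMap.comp
                (TensorProduct.mk k (H ⊗[k] H) H s))) t := by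
      intro s
      induction s using TensorProduct.induction_on with
      | zero =>
        simp only [map_zero, LinearMap.comp_zero, aux_map_zero_right,
          LinearMap.zero_apply]
      | add s s' hs hs' =>
        simp only [map_add, LinearMap.comp_add, TensorProduct.map_add_right,
          LinearMap.add_apply, hs, hs']
      | tmul s1 s2 =>
        have hC : ((Hh.mH.comp (TensorProduct.map LinearMap.id
              (Hh.mH.comp (TensorProduct.map Hh.SA3 LinearMap.id)))).comp
              ((TensorProduct.assoc k H H H).toLinearMap.comp
                (TensorProduct.mk k (H ⊗[k] H) H (s1 ⊗ₜ[k] s2))))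
            = (Hh.mul s1).comp (Hh.mul (Hh.SA3 s2)) := by
          ext p
          simp [TensorProduct.assoc_tmul]
        rw [hC, TensorProduct.map_tmul, TensorProduct.mk_apply, T.liftB_left_eval,
          hG1 s2, aux_map_map]
    rw [start, BRIDGE]
    have hC2 : ((Hh.mH.comp (TensorProduct.map LinearMap.id
          (Hh.mH.comp (TensorProduct.map Hh.SA3 LinearMap.id)))).comp
          ((TensorProduct.assoc k H H H).toLinearMap.comp
            (TensorProduct.mk k (H ⊗[k] H) H (Hh.comul d))))
        = Hh.counit d • (Hh.a.comp Hh.a) := by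
      apply LinearMap.ext; intro p
      simp only [LinearMap.comp_apply, TensorProduct.mk_apply, LinearEquiv.coe_coe,
        LinearMap.smul_apply]
      rw [aux_assoc_tmul_left, aux_map_map, LinearMap.id_comp]
      have hcomp2 : (Hh.mH.comp (TensorProduct.map Hh.SA3 LinearMap.id)).comp
          ((TensorProduct.mk k H H).flip p)
          = (Hh.mul.flip p).comp
              (Hh.antipode.comp (Hh.a.comp (Hh.a.comp Hh.a))) := by
        ext w
        simp [HomHopfAlgebra.SA3]
      rw [show (Hh.mH.comp (TensorProduct.map Hh.SA3 LinearMap.id)).comp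
          ((TensorProduct.mk k H H).flip p) = (Hh.mul.flip p).comp
              (Hh.antipode.comp (Hh.a.comp (Hh.a.comp Hh.a))) from hcomp2]
      exact Hh.hcollapse d p
    rw [hC2, TensorProduct.map_smul_right, LinearMap.smul_apply]
  -- assemble the pointwise identity into a map identity and collapse the counit
  set stuffmap : H →ₗ[k] M ⊗[k] H :=
    ((TensorProduct.map ((T.act z).comp (Φfn.comp Hh.mH)) (Hh.a.comp Hh.a)).comp
      ((TensorProduct.assoc k H H H).symm.toLinearMap.comp
        ((TensorProduct.mk k H (H ⊗[k] H)).flip t))).comp Hh.SA4 with hstuff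
  have hstuffeval : ∀ v : H,
      stuffmap v = TensorProduct.map
        ((T.act z).comp (Φfn.comp (Hh.mul (Hh.SA4 v)))) (Hh.a.comp Hh.a) t := by
    intro v
    have hcomp3 : (((T.act z).comp (Φfn.comp Hh.mH)).comp
        (TensorProduct.mk k H H (Hh.SA4 v)))
        = (T.act z).comp (Φfn.comp (Hh.mul (Hh.SA4 v))) := by
      ext p; simp
    simp only [hstuff, LinearMap.comp_apply, LinearMap.flip_apply,
      TensorProduct.mk_apply, LinearEquiv.coe_coe]
    rw [aux_assoc_symm_tmul_right, aux_map_map, hcomp3, LinearMap.comp_id]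
  have INmap2 : (T.liftB.comp ((TensorProduct.map
        (TensorProduct.mk k M H z)
        (((Hh.Vt Φfn t).comp (TensorProduct.map Hh.a Hh.a)).comp LinearMap.id)).comp
        ((TensorProduct.assoc k H H H).toLinearMap.comp
          (TensorProduct.map Hh.comul Hh.a))))
      = (TensorProduct.lid k (M ⊗[k] H)).toLinearMap.comp
          (TensorProduct.map Hh.counit stuffmap) := by
    apply TensorProduct.ext'
    intro d v
    simp only [LinearMap.comp_apply, LinearEquiv.coe_coe, TensorProduct.map_tmul]
    rw [TensorProduct.lid_tmul, hstuffeval]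
    have := INmap d v
    rw [TensorProduct.map_tmul] at this
    exact this
  have final1 : T.Qt Φfn t (x ⊗ₜ[k] Hh.comul c) = stuffmap (Hh.aut.symm c) := by
    rw [step1, step2, step3]
    have := LinearMap.congr_fun INmap2 (Hh.comul c)
    simp only [LinearMap.comp_apply, LinearEquiv.coe_coe] at this
    rw [this, Hh.counit_collapse_left]
  rw [final1, hstuffeval, aux_assoc_symm_tmul_right, aux_map_map, Hh.nt_eval,
    aux_map_map, LinearMap.id_comp, LinearMap.id_comp]
  have hfincomp : ((TensorProduct.lift T.act).comp (TensorProduct.mk k M A z)).comp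
      (Φfn.comp (Hh.mul (Hh.SA3 c)))
      = (T.act z).comp (Φfn.comp (Hh.mul (Hh.SA4 (Hh.aut.symm c)))) := by
    rw [Hh.SA4_ai]
    ext p; simp
  rw [← hfincomp]

end RelHopfModule

end MainAux2
section MainAux3

open TensorProduct LinearMap

namespace RelHopfModule

variable {k : Type v} [CommRing k] {H A : Type u}
  [AddCommGroup H] [Module k H] [AddCommGroup A] [Module k A]
  {Hh : HomHopfAlgebra k H} {AA : HomComoduleAlgebra k Hh A}
  {M : Type u} [AddCommGroup M] [Module k M] (T : RelHopfModule k Hh AA M)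

/-- The common normal form for both sides. -/
noncomputable def CC (Φfn : H →ₗ[k] A) :
    (M ⊗[k] H) ⊗[k] (H ⊗[k] H) →ₗ[k] M ⊗[k] H :=
  (TensorProduct.map (TensorProduct.lift T.act) Hh.a).comp
    (((TensorProduct.assoc k M A H).symm.toLinearMap).comp
      ((TensorProduct.map (T.mui.comp T.mui)
          (TensorProduct.map
            (Φfn.comp (Hh.mH.comp (TensorProduct.map Hh.SAI Hh.a)))
            LinearMap.id)).comp
        ((TensorProduct.map LinearMap.id
            (TensorProduct.assoc k H H H).symm.toLinearMap).comp
          (TensorProduct.assoc k M H (H ⊗[k] H)).toLinearMap)))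

theorem CCeval2 (Φfn : H →ₗ[k] A) (x : M) (c : H) (s : H ⊗[k] H) :
    T.CC Φfn ((x ⊗ₜ[k] c) ⊗ₜ[k] s)
      = TensorProduct.map
          (((TensorProduct.lift T.act).comp
              (TensorProduct.mk k M A (T.mui (T.mui x)))).comp
            ((Φfn.comp (Hh.mH.comp (TensorProduct.map Hh.SAI Hh.a))).comp
              (TensorProduct.mk k H H c)))
          Hh.a s := by
  simp only [CC, LinearMap.comp_apply, LinearEquiv.coe_coe, TensorProduct.assoc_tmul,
    TensorProduct.map_tmul, LinearMap.id_apply]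
  rw [aux_assoc_symm_tmul_right, aux_map_map, aux_assoc_symm_tmul_right,
    aux_map_map, aux_map_map]
  simp only [LinearMap.comp_id, LinearMap.id_comp]
  rfl

theorem CCeval1 (Φfn : H →ₗ[k] A) (w : M ⊗[k] H) (p q : H) :
    T.CC Φfn (w ⊗ₜ[k] (p ⊗ₜ[k] q))
      = (TensorProduct.lift T.act
          (TensorProduct.map (T.mui.comp T.mui)
            ((Φfn.comp (Hh.mH.comp (TensorProduct.map Hh.SAI Hh.a))).comp
              ((TensorProduct.mk k H H).flip p)) w)) ⊗ₜ[k] Hh.a q := by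
  induction w using TensorProduct.induction_on with
  | zero => simp
  | add w w' hw hw' =>
    simp only [TensorProduct.add_tmul, map_add, hw, hw']
  | tmul x c =>
    rw [T.CCeval2, TensorProduct.map_tmul, TensorProduct.map_tmul]
    simp only [LinearMap.comp_apply, TensorProduct.mk_apply, LinearMap.flip_apply,
      TensorProduct.lift.tmul, TensorProduct.map_tmul]

set_option maxHeartbeats 1000000 in
/-- Pure-tensor colinearity of `λ`. -/
theorem lam_colinear_tmul (Φ : TotalIntegral k Hh AA) (m : M) (h : H) :
    T.coact (lamMap Φ.toFun T (m ⊗ₜ[k] h))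
      = TensorProduct.map (lamMap Φ.toFun T) LinearMap.id
          (Gcoact Hh T.aut (m ⊗ₜ[k] h)) := by
  set t₀ : H ⊗[k] H := Hh.comul (Hh.a h) with ht0
  have cC : ∀ y : H, AA.coact (Hh.gmap Φ.toFun h y)
      = Hh.Vt Φ.toFun t₀ (Hh.comul y) := by
    intro y
    rw [Hh.gmap_apply, Φ.colinear, Hh.comul_mul, Hh.comul_antipode]
    simp only [HomHopfAlgebra.Vt, LinearMap.comp_apply, LinearEquiv.coe_coe,
      LinearMap.flip_apply, TensorProduct.mk_apply]
    rfl
  have cCmap : AA.coact.comp (Hh.gmap Φ.toFun h)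
      = (Hh.Vt Φ.toFun t₀).comp Hh.comul := LinearMap.ext cC
  have D1 : TensorProduct.map T.coact LinearMap.id (T.coact m)
      = TensorProduct.map LinearMap.id Hh.a
          ((TensorProduct.assoc k M H H).symm
            (TensorProduct.map T.mui Hh.comul (T.coact m))) := by
    have inv := congrArg (TensorProduct.assoc k M H H).symm (T.coact_coassoc' m)
    rw [LinearEquiv.symm_apply_apply] at inv
    rw [← inv, aux_map_map, LinearMap.id_comp, Hh.a_comp_ai]
  have KSmap : (T.Qt Φ.toFun t₀).comp (TensorProduct.map LinearMap.id Hh.comul)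
      = (TensorProduct.map (TensorProduct.lift T.act) LinearMap.id).comp
          ((TensorProduct.assoc k M A H).symm.toLinearMap.comp
            (TensorProduct.map T.mui (Hh.nt Φ.toFun t₀))) := by
    apply TensorProduct.ext'
    intro x c
    simp only [LinearMap.comp_apply, TensorProduct.map_tmul, LinearEquiv.coe_coe,
      LinearMap.id_apply, mui_apply]
    exact T.KS Φ.toFun t₀ x c
  have LHS1 : T.coact (lamMap Φ.toFun T (m ⊗ₜ[k] h))
      = TensorProduct.map (TensorProduct.lift T.act) LinearMap.id
          ((TensorProduct.assoc k M A H).symm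
            (TensorProduct.map (T.mui.comp T.mui) (Hh.nt Φ.toFun t₀)
              (T.coact m))) := by
    calc T.coact (lamMap Φ.toFun T (m ⊗ₜ[k] h))
        = T.coact (TensorProduct.lift T.act
            (TensorProduct.map T.mui (Hh.gmap Φ.toFun h) (T.coact m))) := by
          rw [T.lamMap_tmul]
      _ = T.liftB (TensorProduct.map T.coact AA.coact
            (TensorProduct.map T.mui (Hh.gmap Φ.toFun h) (T.coact m))) :=
          T.compat_lift _
      _ = T.liftB (TensorProduct.map (T.coact.comp T.mui)
            (AA.coact.comp (Hh.gmap Φ.toFun h)) (T.coact m)) := by rw [aux_map_map]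
      _ = T.liftB (TensorProduct.map ((TensorProduct.map T.mui Hh.ai).comp T.coact)
            ((Hh.Vt Φ.toFun t₀).comp Hh.comul) (T.coact m)) := by
          rw [T.coact_comp_mui, cCmap]
      _ = T.liftB (TensorProduct.map (TensorProduct.map T.mui Hh.ai)
            (Hh.Vt Φ.toFun t₀)
            (TensorProduct.map T.coact Hh.comul (T.coact m))) := by
          rw [aux_map_map]
      _ = T.P1t Φ.toFun t₀
            (TensorProduct.map T.coact Hh.comul (T.coact m)) := rfl
      _ = T.P1t Φ.toFun t₀ (TensorProduct.map LinearMap.id Hh.comul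
            (TensorProduct.map T.coact LinearMap.id (T.coact m))) := by
          rw [aux_map_map, LinearMap.id_comp, LinearMap.comp_id]
      _ = T.P1t Φ.toFun t₀ (TensorProduct.map LinearMap.id (Hh.comul.comp Hh.a)
            ((TensorProduct.assoc k M H H).symm
              (TensorProduct.map T.mui Hh.comul (T.coact m)))) := by
          rw [D1, aux_map_map, LinearMap.id_comp]
      _ = T.Qt Φ.toFun t₀
            (TensorProduct.map T.mui Hh.comul (T.coact m)) := rfl
      _ = T.Qt Φ.toFun t₀ (TensorProduct.map LinearMap.id Hh.comul
            (TensorProduct.map T.mui LinearMap.id (T.coact m))) := by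
          rw [aux_map_map, LinearMap.id_comp, LinearMap.comp_id]
      _ = TensorProduct.map (TensorProduct.lift T.act) LinearMap.id
            ((TensorProduct.assoc k M A H).symm
              (TensorProduct.map T.mui (Hh.nt Φ.toFun t₀)
                (TensorProduct.map T.mui LinearMap.id (T.coact m)))) := by
          have := LinearMap.congr_fun KSmap
            (TensorProduct.map T.mui LinearMap.id (T.coact m))
          simpa using this
      _ = TensorProduct.map (TensorProduct.lift T.act) LinearMap.id
            ((TensorProduct.assoc k M A H).symm
              (TensorProduct.map (T.mui.comp T.mui) (Hh.nt Φ.toFun t₀)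
                (T.coact m))) := by
          rw [aux_map_map, LinearMap.comp_id]
  set ntPP : H →ₗ[k] A ⊗[k] H :=
    (TensorProduct.map
        (Φ.toFun.comp (Hh.mH.comp (TensorProduct.map Hh.SAI LinearMap.id)))
        LinearMap.id).comp
      ((TensorProduct.assoc k H H H).symm.toLinearMap.comp
        ((TensorProduct.mk k H (H ⊗[k] H)).flip t₀)) with hntPPdef
  have ntPPeval : ∀ c : H, ntPP c
      = TensorProduct.map (Φ.toFun.comp (Hh.mul (Hh.SAI c))) LinearMap.id t₀ := by
    intro c
    have hcomp : ((Φ.toFun.comp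
        (Hh.mH.comp (TensorProduct.map Hh.SAI LinearMap.id))).comp
        (TensorProduct.mk k H H c)) = Φ.toFun.comp (Hh.mul (Hh.SAI c)) := by
      ext p; simp [aux_map_map]
    simp only [hntPPdef, LinearMap.comp_apply, LinearMap.flip_apply,
      TensorProduct.mk_apply, LinearEquiv.coe_coe]
    rw [aux_assoc_symm_tmul_right, aux_map_map, hcomp, LinearMap.comp_id]
  have hdrop : ∀ c : H, Hh.nt Φ.toFun t₀ c
      = TensorProduct.map (Φ.toFun.comp (Hh.mul (Hh.SA3 c))) LinearMap.id t₀ := by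
    intro c
    rw [Hh.nt_eval]
    have h1 : TensorProduct.map (Φ.toFun.comp (Hh.mul (Hh.SA3 c)))
        (Hh.a.comp Hh.a) t₀
        = TensorProduct.map (Φ.toFun.comp (Hh.mul (Hh.SA3 c))) LinearMap.id
            (TensorProduct.map LinearMap.id (Hh.a.comp Hh.a) t₀) := by
      rw [aux_map_map, LinearMap.comp_id, LinearMap.id_comp]
    rw [h1, ht0, Hh.comul_D]
  have hfix : TensorProduct.map (T.mui.comp T.mui) (Hh.nt Φ.toFun t₀) (T.coact m)
      = TensorProduct.map (T.mui.comp T.mui) ntPP (T.coact m) := by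
    have e1 : TensorProduct.map (T.mui.comp T.mui) (Hh.nt Φ.toFun t₀) (T.coact m)
        = TensorProduct.map (T.mui.comp T.mui) (Hh.nt Φ.toFun t₀)
            (TensorProduct.map LinearMap.id
              (Hh.ai.comp (Hh.ai.comp (Hh.ai.comp Hh.ai))) (T.coact m)) := by
      rw [T.coact_Dinv2]
    have hcomp2 : (Hh.nt Φ.toFun t₀).comp
        (Hh.ai.comp (Hh.ai.comp (Hh.ai.comp Hh.ai))) = ntPP := by
      apply LinearMap.ext; intro y
      simp only [LinearMap.comp_apply, HomHopfAlgebra.ai_apply]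
      rw [hdrop, ntPPeval, Hh.SA3_ai4]
    rw [e1, aux_map_map, hcomp2, LinearMap.comp_id]
  have MEETL : ∀ w : M ⊗[k] H,
      TensorProduct.map (TensorProduct.lift T.act) LinearMap.id
        ((TensorProduct.assoc k M A H).symm
          (TensorProduct.map (T.mui.comp T.mui) ntPP w))
      = T.CC Φ.toFun (w ⊗ₜ[k] Hh.comul h) := by
    intro w
    induction w using TensorProduct.induction_on with
    | zero => simp
    | add w w' hw hw' => simp only [map_add, TensorProduct.add_tmul, hw, hw']
    | tmul x c =>
      rw [TensorProduct.map_tmul, aux_assoc_symm_tmul_right, aux_map_map,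
        LinearMap.comp_id, ntPPeval, aux_map_map, LinearMap.comp_id]
      have ht0' : t₀ = TensorProduct.map Hh.aut.toLinearMap Hh.aut.toLinearMap
          (Hh.comul h) := Hh.comul_aut h
      rw [ht0', aux_map_map, LinearMap.id_comp, T.CCeval2]
      have hcmp : (((TensorProduct.lift T.act).comp
            (TensorProduct.mk k M A ((T.mui.comp T.mui) x))).comp
            (Φ.toFun.comp (Hh.mul (Hh.SAI c)))).comp Hh.aut.toLinearMap
          = ((TensorProduct.lift T.act).comp
              (TensorProduct.mk k M A (T.mui (T.mui x)))).comp
            ((Φ.toFun.comp (Hh.mH.comp (TensorProduct.map Hh.SAI Hh.a))).comp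
              (TensorProduct.mk k H H c)) := by
        ext p
        simp
      rw [hcmp]
      rfl
  have MEETR : ∀ s : H ⊗[k] H,
      TensorProduct.map ((lamMap Φ.toFun T).comp
        (TensorProduct.mk k M H (T.aut.symm m))) Hh.a s
      = T.CC Φ.toFun ((T.coact m) ⊗ₜ[k] s) := by
    intro s
    induction s using TensorProduct.induction_on with
    | zero => simp
    | add s s' hs hs' => simp only [map_add, TensorProduct.tmul_add, hs, hs']
    | tmul p q =>
      rw [TensorProduct.map_tmul, LinearMap.comp_apply, TensorProduct.mk_apply,
        T.lamMap_tmul, T.coact_ai m, aux_map_map, T.CCeval1]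
      have hcmp : (Hh.gmap Φ.toFun p).comp Hh.ai
          = (Φ.toFun.comp (Hh.mH.comp (TensorProduct.map Hh.SAI Hh.a))).comp
              ((TensorProduct.mk k H H).flip p) := by
        ext c
        simp [HomHopfAlgebra.SAI]
      rw [hcmp]
  have RHSred : TensorProduct.map (lamMap Φ.toFun T) LinearMap.id
        (Gcoact Hh T.aut (m ⊗ₜ[k] h))
      = TensorProduct.map ((lamMap Φ.toFun T).comp
          (TensorProduct.mk k M H (T.aut.symm m))) Hh.a (Hh.comul h) := by
    simp only [Gcoact, LinearMap.comp_apply, LinearEquiv.coe_coe,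
      TensorProduct.map_tmul]
    rw [aux_assoc_symm_tmul_right, aux_map_map, aux_map_map, LinearMap.comp_id,
      LinearMap.id_comp, LinearMap.id_comp]
    rfl
  rw [LHS1, hfix, MEETL (T.coact m), RHSred, MEETR (Hh.comul h)]

end RelHopfModule

end MainAux3

section Statements

variable {k : Type v} [CommRing k] {H A : Type u}
  [AddCommGroup H] [Module k H] [AddCommGroup A] [Module k A]

/-- Lemma 5.5(1): for a total integral `φ`, relative Hom-Hopf modules
`(M,μ)`, `(N,ν)` and a `k`-linear map `f : N → M` with `f ∘ ν = μ ∘ f`, the map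
`f_φ(n) = μ⁻¹(f(n₍₀₎)₍₀₎) · φ(S(f(n₍₀₎)₍₁₎) α(n₍₁₎))` is a morphism of right
`(H,α)`-Hom-comodules. -/
theorem f_phi_is_comodule_morphism
    {M N : Type u} [AddCommGroup M] [Module k M] [AddCommGroup N] [Module k N]
    (Hh : HomHopfAlgebra k H) (AA : HomComoduleAlgebra k Hh A)
    (Φ : TotalIntegral k Hh AA)
    (Mm : RelHopfModule k Hh AA M) (Nn : RelHopfModule k Hh AA N)
    (f : N →ₗ[k] M) (hf : ∀ n, f (Nn.aut n) = Mm.aut (f n)) :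
    let fφ : N →ₗ[k] M :=
      (lamMap Φ.toFun Mm).comp ((TensorProduct.map f LinearMap.id).comp Nn.coact)
    Mm.coact.comp fφ = (TensorProduct.map fφ LinearMap.id).comp Nn.coact := by
  intro fφ
  have hfφ : fφ = (lamMap Φ.toFun Mm).comp
      ((TensorProduct.map f LinearMap.id).comp Nn.coact) := rfl
  apply LinearMap.ext
  intro n
  simp only [LinearMap.comp_apply, hfφ]
  have hfi : ∀ n' : N, Mm.aut.symm (f n') = f (Nn.aut.symm n') := by
    intro n'
    apply Mm.aut.injective
    rw [Mm.aut.apply_symm_apply, ← hf, Nn.aut.apply_symm_apply]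
  have K : ∀ u : M ⊗[k] H, Mm.coact (lamMap Φ.toFun Mm u)
      = TensorProduct.map (lamMap Φ.toFun Mm) LinearMap.id (Gcoact Hh Mm.aut u) := by
    intro u
    induction u using TensorProduct.induction_on with
    | zero => simp
    | tmul m h => exact Mm.lam_colinear_tmul Φ m h
    | add a b ha hb => simp only [map_add, ha, hb]
  have B : ∀ s : N ⊗[k] H,
      Gcoact Hh Mm.aut (TensorProduct.map f LinearMap.id s)
        = TensorProduct.map (TensorProduct.map f LinearMap.id) LinearMap.id
            (Gcoact Hh Nn.aut s) := by
    intro s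
    induction s using TensorProduct.induction_on with
    | zero => simp
    | add a b ha hb => simp only [map_add, ha, hb]
    | tmul n' h' =>
      have hcmp : (TensorProduct.map f LinearMap.id).comp
          (TensorProduct.mk k N H (Nn.aut.symm n'))
          = TensorProduct.mk k M H (f (Nn.aut.symm n')) := by
        ext y; simp
      simp only [Gcoact, LinearMap.comp_apply, LinearEquiv.coe_coe,
        TensorProduct.map_tmul, LinearMap.id_apply]
      rw [hfi n', aux_assoc_symm_tmul_right, aux_assoc_symm_tmul_right,
        aux_map_map (TensorProduct.map f LinearMap.id) LinearMap.id
          (TensorProduct.mk k N H (Nn.aut.symm n')) LinearMap.id, hcmp]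
      rfl
  have Acl : Gcoact Hh Nn.aut (Nn.coact n)
      = TensorProduct.map Nn.coact LinearMap.id (Nn.coact n) := by
    simp only [Gcoact, LinearMap.comp_apply, LinearEquiv.coe_coe]
    have h1 : TensorProduct.map Nn.aut.symm.toLinearMap
        ((TensorProduct.map LinearMap.id Hh.aut.toLinearMap).comp Hh.comul)
        (Nn.coact n)
        = TensorProduct.map LinearMap.id
            (TensorProduct.map LinearMap.id Hh.aut.toLinearMap)
            (TensorProduct.map Nn.aut.symm.toLinearMap Hh.comul (Nn.coact n)) := by
      rw [aux_map_map, LinearMap.id_comp]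
    rw [h1, ← Nn.hom_coassoc n, ← aux_assoc_rtwist, LinearEquiv.symm_apply_apply,
      aux_map_map, LinearMap.id_comp]
    have h2 : Hh.aut.toLinearMap.comp Hh.aut.symm.toLinearMap
        = (LinearMap.id : H →ₗ[k] H) := by ext y; simp
    rw [h2]
  calc Mm.coact (lamMap Φ.toFun Mm
        (TensorProduct.map f LinearMap.id (Nn.coact n)))
      = TensorProduct.map (lamMap Φ.toFun Mm) LinearMap.id
          (Gcoact Hh Mm.aut (TensorProduct.map f LinearMap.id (Nn.coact n))) := K _
    _ = TensorProduct.map (lamMap Φ.toFun Mm) LinearMap.id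
          (TensorProduct.map (TensorProduct.map f LinearMap.id) LinearMap.id
            (Gcoact Hh Nn.aut (Nn.coact n))) := by rw [B]
    _ = TensorProduct.map (lamMap Φ.toFun Mm) LinearMap.id
          (TensorProduct.map (TensorProduct.map f LinearMap.id) LinearMap.id
            (TensorProduct.map Nn.coact LinearMap.id (Nn.coact n))) := by rw [Acl]
    _ = TensorProduct.map ((lamMap Φ.toFun Mm).comp
          ((TensorProduct.map f LinearMap.id).comp Nn.coact)) LinearMap.id
          (Nn.coact n) := by
        rw [aux_map_map, aux_map_map]
        rfl

end Statements
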